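/- arXiv:1705.10499 — 5 statements merged into one kernel-verified Lean document; each statement's English description precedes it below -/
import Mathlib

section
/- (AdaGrad regret bound.) Let f_1, …, f_T : ℝ^d → ℝ be convex differentiable functions. Let x_1 ∈ K, and for t = 1, …, T set g_t := ∇f_t(x_t), η_t := D / √(2 Σ_{τ=1}^t ‖g_τ‖²), and x_{t+1} := Π_K(x_t − η_t g_t). Assume g_1 ≠ 0 (so all learning rates are well defined). Then for every x ∈ K: Σ_{t=1}^T f_t(x_t) − Σ_{t=1}^T f_t(x) ≤ √(2 D² Σ_{t=1}^T ‖g_t‖²). -/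
/-! Projection onto `K` does not increase the distance to a comparator `xs ∈ K`, so convexity gives
`f_t(x_t) - f_t(xs) ≤ ⟪g_t, x_t - xs⟫ ≤ (‖x_t - xs‖² - ‖x_{t+1} - xs‖²) / (2η_t) + η_t ‖g_t‖² / 2`.
Since `1/η_t` is nondecreasing and `‖x_t - xs‖ ≤ D`, summation by parts bounds the first sum by
`D² / (2η_T)`, and `∑_t ‖g_t‖² / √(∑_{τ≤t} ‖g_τ‖²) ≤ 2 √(∑_{t≤T} ‖g_t‖²)` bounds the second;
each contributes half of `D √(2 ∑_t ‖g_t‖²)`. -/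

open RealInnerProductSpace Finset Real

section

variable {E : Type*} [NormedAddCommGroup E] [InnerProductSpace ℝ E] {K : Set E}

lemma real_inner_sub_le_zero_of_forall_norm_le (hK : Convex ℝ K) {p y z : E} (hp : p ∈ K)
    (hmin : ∀ w ∈ K, ‖p - y‖ ≤ ‖w - y‖) (hz : z ∈ K) : ⟪y - p, z - p⟫ ≤ 0 := by
  have : Nonempty K := ⟨⟨p, hp⟩⟩
  refine (norm_eq_iInf_iff_real_inner_le_zero hK hp).mp ?_ z hz
  refine le_antisymm (le_ciInf fun w => ?_) (ciInf_le (⟨0, ?_⟩ : BddBelow _) (⟨p, hp⟩ : K))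
  · simpa only [norm_sub_rev y] using hmin w w.2
  · rintro _ ⟨w, rfl⟩
    exact norm_nonneg _

lemma norm_sub_sq_le_of_forall_norm_le (hK : Convex ℝ K) {p y z : E} (hp : p ∈ K)
    (hmin : ∀ w ∈ K, ‖p - y‖ ≤ ‖w - y‖) (hz : z ∈ K) : ‖p - z‖ ^ 2 ≤ ‖y - z‖ ^ 2 := by
  have hvar := real_inner_sub_le_zero_of_forall_norm_le hK hp hmin hz
  have hexpand := norm_sub_sq_real (y - p) (z - p)
  rw [sub_sub_sub_cancel_right, norm_sub_rev z] at hexpand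
  nlinarith [sq_nonneg ‖y - p‖]

lemma real_inner_le_of_projected_step (hK : Convex ℝ K) {η : ℝ} (hη : 0 < η) {y g p z : E}
    (hp : p ∈ K) (hmin : ∀ w ∈ K, ‖p - (y - η • g)‖ ≤ ‖w - (y - η • g)‖) (hz : z ∈ K) :
    ⟪g, y - z⟫ ≤ (‖y - z‖ ^ 2 - ‖p - z‖ ^ 2) / (2 * η) + η / 2 * ‖g‖ ^ 2 := by
  have hdecr := norm_sub_sq_le_of_forall_norm_le hK hp hmin hz
  rw [sub_right_comm, norm_sub_sq_real (y - z), real_inner_smul_right, real_inner_comm, norm_smul,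
    norm_of_nonneg hη.le] at hdecr
  rw [← sub_le_iff_le_add, le_div_iff₀ (by positivity)]
  linarith

lemma real_inner_le_adagrad_step (hK : Convex ℝ K) {D s : ℝ} (hD : 0 ≤ D) (hs : 0 ≤ s)
    {y g p z : E} (hp : p ∈ K) (hmin : ∀ w ∈ K, ‖p - (y - (D / s) • g)‖ ≤ ‖w - (y - (D / s) • g)‖)
    (hz : z ∈ K) (hyz : ‖y - z‖ ≤ D) (hgs : ‖g‖ ≤ s) :
    ⟪g, y - z⟫ ≤ s / (2 * D) * (‖y - z‖ ^ 2 - ‖p - z‖ ^ 2) + D / 2 * (‖g‖ ^ 2 / s) := by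
  -- If `D = 0` or `s = 0` the step size `D / s` is `0`, but then `y = z` or `g = 0`.
  rcases hD.eq_or_lt with rfl | hD
  · simp [sub_eq_zero.mp (norm_le_zero_iff.mp hyz)]
  rcases hs.eq_or_lt with rfl | hs
  · simp [norm_le_zero_iff.mp hgs]
  convert real_inner_le_of_projected_step hK (div_pos hD hs) hp hmin hz using 2
  · field_simp
  · field_simp

lemma sub_le_real_inner_gradient [CompleteSpace E] {f : E → ℝ}
    (hf : ∀ x y, f x + ⟪gradient f x, y - x⟫ ≤ f y) (x y : E) :
    f x - f y ≤ ⟪gradient f x, x - y⟫ := by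
  have := hf x y
  rw [← neg_sub, inner_neg_right] at this
  linarith

end

lemma norm_le_sqrt_two_mul_sum_sq {E : Type*} [SeminormedAddCommGroup E] (g : ℕ → E) {t : ℕ}
    (ht : 1 ≤ t) : ‖g t‖ ≤ √(2 * ∑ τ ∈ Icc 1 t, ‖g τ‖ ^ 2) := by
  refine le_sqrt_of_sq_le ?_
  have : ‖g t‖ ^ 2 ≤ ∑ τ ∈ Icc 1 t, ‖g τ‖ ^ 2 :=
    single_le_sum (f := fun τ => ‖g τ‖ ^ 2) (fun _ _ => sq_nonneg _) (mem_Icc.2 ⟨ht, le_rfl⟩)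
  linarith [sq_nonneg ‖g t‖]

lemma sub_div_sqrt_two_mul_le {u v : ℝ} (hu : 0 ≤ u) (huv : u ≤ v) :
    (v - u) / √(2 * v) ≤ √(2 * v) - √(2 * u) := by
  have hsq_u := sq_sqrt (by linarith : 0 ≤ 2 * u)
  have hsq_v := sq_sqrt (by linarith : 0 ≤ 2 * v)
  have hmono := sqrt_le_sqrt (by linarith : 2 * u ≤ 2 * v)
  refine div_le_of_le_mul₀ (sqrt_nonneg _) (sub_nonneg.2 hmono) ?_
  nlinarith [sqrt_nonneg (2 * u)]

lemma sum_div_sqrt_two_mul_sum_le (c : ℕ → ℝ) (hc : ∀ t, 0 ≤ c t) (n : ℕ) :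
    ∑ t ∈ Icc 1 n, c t / √(2 * ∑ τ ∈ Icc 1 t, c τ) ≤ √(2 * ∑ t ∈ Icc 1 n, c t) := by
  induction n with
  | zero => simp
  | succ n ih =>
    rw [sum_Icc_succ_top (by omega), sum_Icc_succ_top (by omega)]
    have hstep := sub_div_sqrt_two_mul_le (sum_nonneg (s := Icc 1 n) fun t _ => hc t)
      (le_add_of_nonneg_right (hc (n + 1)))
    rw [add_sub_cancel_left] at hstep
    linarith

lemma div_two_mul_mul_sq (x y : ℝ) : x / (2 * y) * y ^ 2 = y / 2 * x := by
  rcases eq_or_ne y 0 with rfl | hy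
  · simp
  · field_simp

lemma sum_mul_sub_succ_le_mul_sub {a b : ℕ → ℝ} {C : ℝ} (hb : Monotone b) (hb0 : 0 ≤ b 0)
    {n : ℕ} (ha : ∀ t ∈ Icc 1 (n + 1), a t ≤ C) :
    ∑ t ∈ Icc 1 n, b t * (a t - a (t + 1)) ≤ b n * (C - a (n + 1)) := by
  induction n with
  | zero => simpa using mul_nonneg hb0 (sub_nonneg.2 (ha 1 (by simp)))
  | succ n ih =>
    rw [sum_Icc_succ_top (by omega)]
    have hprev := ih fun t ht => ha t (Icc_subset_Icc le_rfl (by omega) ht)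
    have hgrow := mul_le_mul_of_nonneg_right (hb n.le_succ)
      (sub_nonneg.2 (ha (n + 1) (mem_Icc.2 ⟨by omega, by omega⟩)))
    linarith

lemma sum_mul_sub_succ_le_mul {a b : ℕ → ℝ} {C : ℝ} (hb : Monotone b) (hb0 : 0 ≤ b 0)
    {n : ℕ} (ha : ∀ t ∈ Icc 1 (n + 1), a t ≤ C) (ha0 : 0 ≤ a (n + 1)) :
    ∑ t ∈ Icc 1 n, b t * (a t - a (t + 1)) ≤ b n * C :=
  (sum_mul_sub_succ_le_mul_sub hb hb0 ha).trans <|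
    mul_le_mul_of_nonneg_left (sub_le_self C ha0) (hb0.trans (hb n.zero_le))

theorem adagrad_regret_general
    {d : ℕ} (T : ℕ)
    (K : Set (EuclideanSpace ℝ (Fin d)))
    (hKbdd : Bornology.IsBounded K)
    (hKconv : Convex ℝ K)
    (proj : EuclideanSpace ℝ (Fin d) → EuclideanSpace ℝ (Fin d))
    (hproj_mem : ∀ y, proj y ∈ K)
    (hproj_min : ∀ y, ∀ z ∈ K, ‖proj y - y‖ ≤ ‖z - y‖)
    (D : ℝ) (hD : D = Metric.diam K)
    (f : ℕ → EuclideanSpace ℝ (Fin d) → ℝ)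
    (hconv : ∀ t x y, f t x + (inner ℝ (gradient (f t) x) (y - x) : ℝ) ≤ f t y)
    (x : ℕ → EuclideanSpace ℝ (Fin d)) (g : ℕ → EuclideanSpace ℝ (Fin d)) (η : ℕ → ℝ)
    (hx1 : x 1 ∈ K)
    (hg : ∀ t, g t = gradient (f t) (x t))
    (hη : ∀ t, η t = D / Real.sqrt (2 * ∑ τ ∈ Finset.Icc 1 t, ‖g τ‖ ^ 2))
    (hupd : ∀ t ∈ Finset.Icc 1 T, x (t + 1) = proj (x t - η t • g t)) :
    ∀ xs ∈ K,
      ∑ t ∈ Finset.Icc 1 T, f t (x t) - ∑ t ∈ Finset.Icc 1 T, f t xs ≤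
        Real.sqrt (2 * D ^ 2 * ∑ t ∈ Finset.Icc 1 T, ‖g t‖ ^ 2) := by
  intro xs hxs
  set S : ℕ → ℝ := fun t => ∑ τ ∈ Icc 1 t, ‖g τ‖ ^ 2
  have hD0 : 0 ≤ D := hD ▸ Metric.diam_nonneg
  have hxK : ∀ t ∈ Icc 1 (T + 1), x t ∈ K := by
    rintro (_ | _ | t) ht
    exacts [by simp at ht, hx1, hupd (t + 1) (by simp at ht ⊢; omega) ▸ hproj_mem _]
  have hdist : ∀ t ∈ Icc 1 (T + 1), ‖x t - xs‖ ≤ D := fun t ht => by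
    simpa only [hD, dist_eq_norm] using Metric.dist_le_diam_of_mem hKbdd (hxK t ht) hxs
  have hstep : ∀ t ∈ Icc 1 T, f t (x t) - f t xs ≤ √(2 * S t) / (2 * D) *
      (‖x t - xs‖ ^ 2 - ‖x (t + 1) - xs‖ ^ 2) + D / 2 * (‖g t‖ ^ 2 / √(2 * S t)) := by
    intro t ht
    have hproj : x (t + 1) = proj (x t - (D / √(2 * S t)) • g t) := hη t ▸ hupd t ht
    refine (hg t ▸ sub_le_real_inner_gradient (hconv t) (x t) xs).trans <|
      real_inner_le_adagrad_step hKconv hD0 (sqrt_nonneg _) (hproj ▸ hproj_mem _)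
        (hproj ▸ hproj_min _) hxs (hdist t (Icc_subset_Icc le_rfl T.le_succ ht))
        (norm_le_sqrt_two_mul_sum_sq g (mem_Icc.1 ht).1)
  have hweight : Monotone fun t => √(2 * S t) / (2 * D) := fun s t hst => by
    dsimp only
    gcongr
    exact sum_le_sum_of_subset_of_nonneg (Icc_subset_Icc le_rfl hst) fun _ _ _ => sq_nonneg _
  calc ∑ t ∈ Icc 1 T, f t (x t) - ∑ t ∈ Icc 1 T, f t xs
      ≤ ∑ t ∈ Icc 1 T, (√(2 * S t) / (2 * D) * (‖x t - xs‖ ^ 2 - ‖x (t + 1) - xs‖ ^ 2)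
          + D / 2 * (‖g t‖ ^ 2 / √(2 * S t))) := by
        rw [← sum_sub_distrib]
        exact sum_le_sum hstep
    _ ≤ √(2 * S T) / (2 * D) * D ^ 2 + D / 2 * √(2 * S T) := by
        rw [sum_add_distrib, ← mul_sum]
        gcongr
        · exact sum_mul_sub_succ_le_mul hweight (by positivity)
            (fun t ht => pow_le_pow_left₀ (norm_nonneg _) (hdist t ht) 2) (sq_nonneg _)
        · exact sum_div_sqrt_two_mul_sum_le _ (fun _ => sq_nonneg _) T
    _ = √(2 * D ^ 2 * S T) := by
        rw [div_two_mul_mul_sq, show 2 * D ^ 2 * S T = D ^ 2 * (2 * S T) by ring,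
          sqrt_mul (sq_nonneg D), sqrt_sq hD0]
        ring

theorem adagrad_regret
    {d : ℕ} (T : ℕ) (hT : 1 ≤ T)
    (K : Set (EuclideanSpace ℝ (Fin d)))
    (hKne : K.Nonempty) (hKcl : IsClosed K) (hKbdd : Bornology.IsBounded K)
    (hKconv : Convex ℝ K)
    (proj : EuclideanSpace ℝ (Fin d) → EuclideanSpace ℝ (Fin d))
    (hproj_mem : ∀ y, proj y ∈ K)
    (hproj_min : ∀ y, ∀ z ∈ K, ‖proj y - y‖ ≤ ‖z - y‖)
    (D : ℝ) (hD : D = Metric.diam K)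
    (f : ℕ → EuclideanSpace ℝ (Fin d) → ℝ)
    (hdiff : ∀ t, Differentiable ℝ (f t))
    (hconv : ∀ t x y, f t x + (inner ℝ (gradient (f t) x) (y - x) : ℝ) ≤ f t y)
    (x : ℕ → EuclideanSpace ℝ (Fin d)) (g : ℕ → EuclideanSpace ℝ (Fin d)) (η : ℕ → ℝ)
    (hx1 : x 1 ∈ K)
    (hg : ∀ t, g t = gradient (f t) (x t))
    (hg1 : g 1 ≠ 0)
    (hη : ∀ t, η t = D / Real.sqrt (2 * ∑ τ ∈ Finset.Icc 1 t, ‖g τ‖ ^ 2))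
    (hupd : ∀ t ∈ Finset.Icc 1 T, x (t + 1) = proj (x t - η t • g t)) :
    ∀ xs ∈ K,
      ∑ t ∈ Finset.Icc 1 T, f t (x t) - ∑ t ∈ Finset.Icc 1 T, f t xs ≤
        Real.sqrt (2 * D ^ 2 * ∑ t ∈ Finset.Icc 1 T, ‖g t‖ ^ 2) :=
  adagrad_regret_general T K hKbdd hKconv proj hproj_mem hproj_min D hD f hconv x g η hx1 hg hη hupd
end

section
/- (AdaNGD_1, general convex case.) Let f : ℝ^d → ℝ be convex and differentiable with ‖∇f(x)‖ ≤ G for all x ∈ K, and let x_1, …, x_T and x̄_T be the AdaNGD_k iterates and output with k = 1, with g_t := ∇f(x_t) ≠ 0 for all t = 1, …, T. Then f(x̄_T) − min_{x ∈ K} f(x) ≤ √(2 D² T) / (Σ_{t=1}^T 1/‖g_t‖) ≤ √2 · G D / √T. -/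
/-!
A projected step is non-expansive towards every comparator `z ∈ K`, so for the unit directions
`vₜ = gₜ / ‖gₜ‖` one gets `2 ηₜ ⟪vₜ, xₜ - z⟫ ≤ ‖xₜ - z‖² - ‖xₜ₊₁ - z‖² + ηₜ²`. Dividing by `2 ηₜ`
and summing by parts against the increasing weights `1 / (2 ηₜ)` bounds the normalized regret
`∑ ⟪vₜ, xₜ - z⟫` by `D² / (2 η_T) + ∑ ηₜ / 2 ≤ √(2 D² T)`. By the gradient inequality this sum
dominates `∑ ‖gₜ‖⁻¹ (f xₜ - f z)`, and Jensen's inequality for the weights `‖gₜ‖⁻¹` bounds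
`f x̄_T - f z` by that sum divided by `∑ ‖gₜ‖⁻¹`. Finally `‖gₜ‖ ≤ G` gives `∑ ‖gₜ‖⁻¹ ≥ T / G`.
-/

open Finset
open scoped RealInnerProductSpace

theorem sum_Icc_sub_mul_le_mul {b φ : ℕ → ℝ} {B : ℝ} {n : ℕ} (hn : 1 ≤ n)
    (hφ : MonotoneOn φ (Set.Icc 1 n)) (hφ_one : 0 ≤ φ 1) (hb : ∀ t ∈ Icc 1 n, b t ≤ B)
    (hb_last : 0 ≤ b (n + 1)) :
    ∑ t ∈ Icc 1 n, (b t - b (t + 1)) * φ t ≤ B * φ n := by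
  have hpartial : ∀ m, 1 ≤ m → m ≤ n →
      ∑ t ∈ Icc 1 m, (b t - b (t + 1)) * φ t ≤ (B - b (m + 1)) * φ m := by
    intro m hm
    induction m, hm using Nat.le_induction with
    | base =>
      intro h1n
      have hbφ := mul_le_mul_of_nonneg_right (hb 1 (mem_Icc.mpr ⟨le_rfl, h1n⟩)) hφ_one
      simp only [Icc_self, sum_singleton]
      linarith
    | succ m hm ih =>
      intro hmn
      have hφm : φ m ≤ φ (m + 1) := hφ ⟨hm, by omega⟩ ⟨by omega, hmn⟩ (by omega)
      have hbm := sub_nonneg.mpr (hb (m + 1) (mem_Icc.mpr ⟨by omega, hmn⟩))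
      have hweight := mul_le_mul_of_nonneg_left hφm hbm
      rw [sum_Icc_succ_top (by omega)]
      linarith [ih (by omega)]
  have hφn : 0 ≤ φ n := hφ_one.trans (hφ ⟨le_rfl, hn⟩ ⟨hn, le_rfl⟩ hn)
  linarith [hpartial n hn le_rfl, mul_nonneg hb_last hφn]

theorem sum_Icc_inv_sqrt_le (T : ℕ) : ∑ t ∈ Icc 1 T, (√t)⁻¹ ≤ 2 * √T := by
  induction T with
  | zero => simp
  | succ n ih =>
    rw [sum_Icc_succ_top (by omega), Nat.cast_succ]
    have hlt : 0 < √((n : ℝ) + 1) := Real.sqrt_pos.mpr (by positivity)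
    have hle : √(n : ℝ) ≤ √((n : ℝ) + 1) := Real.sqrt_le_sqrt (by linarith)
    have hn : √(n : ℝ) ^ 2 = n := Real.sq_sqrt n.cast_nonneg
    have hn1 : √((n : ℝ) + 1) ^ 2 = n + 1 := Real.sq_sqrt (by positivity)
    -- `2√(n+1)·(√(n+1) - √n) ≥ 2(n+1) - (n + (n+1)) = 1` by AM-GM on `√n·√(n+1)`
    have hterm : (√((n : ℝ) + 1))⁻¹ ≤ 2 * (√((n : ℝ) + 1) - √n) := by
      rw [inv_le_iff_one_le_mul₀' hlt]
      nlinarith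
    linarith

theorem div_sum_inv_le {ι : Type*} {s : Finset ι} {a : ι → ℝ} {G C : ℝ} (hC : 0 ≤ C)
    (hs : s.Nonempty) (ha : ∀ i ∈ s, 0 < a i) (haG : ∀ i ∈ s, a i ≤ G) :
    C / ∑ i ∈ s, (a i)⁻¹ ≤ C * G / #s := by
  obtain ⟨i, hi⟩ := hs
  have hG : 0 < G := (ha i hi).trans_le (haG i hi)
  have hcard : (#s : ℝ) * G⁻¹ ≤ ∑ i ∈ s, (a i)⁻¹ := by
    simpa only [nsmul_eq_mul] using
      card_nsmul_le_sum s _ _ fun i hi => inv_anti₀ (ha i hi) (haG i hi)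
  have hpos : 0 < (#s : ℝ) * G⁻¹ := by
    have hs : 0 < #s := card_pos.mpr ⟨i, hi⟩
    positivity
  calc C / ∑ i ∈ s, (a i)⁻¹ ≤ C / (#s * G⁻¹) := div_le_div_of_nonneg_left hC hpos hcard
    _ = C * G / #s := by field_simp

section ProjectedGradient

variable {F : Type*} [NormedAddCommGroup F] [InnerProductSpace ℝ F]

theorem norm_sub_le_norm_sub_of_isNearest {K : Set F} (hK : Convex ℝ K) {y p : F} (hp : p ∈ K)
    (hmin : ∀ z ∈ K, ‖p - y‖ ≤ ‖z - y‖) {z : F} (hz : z ∈ K) : ‖p - z‖ ≤ ‖y - z‖ := by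
  have : Nonempty K := ⟨⟨p, hp⟩⟩
  have hinf : ‖y - p‖ = ⨅ w : K, ‖y - w‖ :=
    le_antisymm (le_ciInf fun w => by simpa only [norm_sub_rev y] using hmin w w.2)
      (ciInf_le ⟨0, Set.forall_mem_range.mpr fun w : K => norm_nonneg (y - w)⟩ ⟨p, hp⟩)
  have hobtuse : ⟪y - p, z - p⟫ ≤ 0 := (norm_eq_iInf_iff_real_inner_le_zero hK hp).mp hinf z hz
  have hsplit : ‖y - z‖ ^ 2 = ‖y - p‖ ^ 2 - 2 * ⟪y - p, z - p⟫ + ‖p - z‖ ^ 2 := by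
    rw [show y - z = (y - p) - (z - p) by abel, norm_sub_sq_real, norm_sub_rev z p]
  refine (pow_le_pow_iff_left₀ (norm_nonneg _) (norm_nonneg _) two_ne_zero).mp ?_
  linarith [sq_nonneg ‖y - p‖]

theorem norm_proj_sub_smul_sub_sq_le {K : Set F} (hK : Convex ℝ K) {proj : F → F}
    (hproj_mem : ∀ y, proj y ∈ K) (hproj_min : ∀ y, ∀ z ∈ K, ‖proj y - y‖ ≤ ‖z - y‖)
    (x v : F) (η : ℝ) {z : F} (hz : z ∈ K) :
    ‖proj (x - η • v) - z‖ ^ 2 ≤ ‖x - z‖ ^ 2 - 2 * η * ⟪v, x - z⟫ + η ^ 2 * ‖v‖ ^ 2 := by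
  calc ‖proj (x - η • v) - z‖ ^ 2 ≤ ‖x - η • v - z‖ ^ 2 := by
        gcongr
        exact norm_sub_le_norm_sub_of_isNearest hK (hproj_mem _) (hproj_min _) hz
    _ = _ := by
        rw [show x - η • v - z = (x - z) - η • v by abel, norm_sub_sq_real, real_inner_smul_right,
          norm_smul, mul_pow, Real.norm_eq_abs, sq_abs, real_inner_comm]
        ring

theorem convexOn_univ_of_le_add_inner {f : F → ℝ} {g : F → F}
    (hf : ∀ x y, f x + ⟪g x, y - x⟫ ≤ f y) : ConvexOn ℝ Set.univ f := by
  refine ⟨convex_univ, fun x _ y _ a b ha hb hab => ?_⟩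
  set m := a • x + b • y
  have hbalance : a * ⟪g m, x - m⟫ + b * ⟪g m, y - m⟫ = 0 := by
    rw [← real_inner_smul_right, ← real_inner_smul_right, ← inner_add_right]
    convert inner_zero_right (g m)
    linear_combination (norm := module) (-hab) • m
  have hfm : f m = a * f m + b * f m := by rw [← add_mul, hab, one_mul]
  have hx := mul_le_mul_of_nonneg_left (hf m x) ha
  have hy := mul_le_mul_of_nonneg_left (hf m y) hb
  simp only [smul_eq_mul]
  linarith

theorem sum_div_smul_sub_le {ι : Type*} {s : Finset ι} {f : F → ℝ} {g : F → F}
    (hf : ∀ x y, f x + ⟪g x, y - x⟫ ≤ f y) {c : ι → ℝ} (hc : ∀ i ∈ s, 0 ≤ c i)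
    (hS : 0 < ∑ i ∈ s, c i) (x : ι → F) (z : F) :
    f (∑ i ∈ s, (c i / ∑ j ∈ s, c j) • x i) - f z ≤
      (∑ i ∈ s, c i * ⟪g (x i), x i - z⟫) / ∑ i ∈ s, c i := by
  set S := ∑ j ∈ s, c j
  have hw : ∀ i ∈ s, 0 ≤ c i / S := fun i hi => div_nonneg (hc i hi) hS.le
  have hw_sum : ∑ i ∈ s, c i / S = 1 := by rw [← sum_div, div_self hS.ne']
  have hjensen := (convexOn_univ_of_le_add_inner hf).map_sum_le hw hw_sum
    fun i _ => Set.mem_univ (x i)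
  have hsub : ∀ i ∈ s, c i / S * (f (x i) - f z) ≤ c i / S * ⟪g (x i), x i - z⟫ := by
    intro i hi
    refine mul_le_mul_of_nonneg_left ?_ (hw i hi)
    have hfi := hf (x i) z
    rw [← neg_sub (x i) z, inner_neg_right] at hfi
    linarith
  calc f (∑ i ∈ s, (c i / S) • x i) - f z
      ≤ ∑ i ∈ s, c i / S * (f (x i) - f z) := by
        simp only [mul_sub, sum_sub_distrib, ← sum_mul, hw_sum, one_mul]
        simpa only [smul_eq_mul] using sub_le_sub_right hjensen (f z)
    _ ≤ ∑ i ∈ s, c i / S * ⟪g (x i), x i - z⟫ := sum_le_sum hsub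
    _ = (∑ i ∈ s, c i * ⟪g (x i), x i - z⟫) / S := by
        rw [sum_div]; exact sum_congr rfl fun i _ => div_mul_eq_mul_div _ _ _

variable {K : Set F} {proj : F → F} {T : ℕ} {η : ℕ → ℝ} {x v : ℕ → F} {z : F}

theorem sum_inner_sub_le_of_projected_steps (hK : Convex ℝ K) (hproj_mem : ∀ y, proj y ∈ K)
    (hproj_min : ∀ y, ∀ z ∈ K, ‖proj y - y‖ ≤ ‖z - y‖) (hT : 1 ≤ T)
    (hη_pos : ∀ t ∈ Icc 1 T, 0 < η t) (hη_anti : AntitoneOn η (Set.Icc 1 T))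
    (hv : ∀ t ∈ Icc 1 T, ‖v t‖ ≤ 1) (hupd : ∀ t ∈ Icc 1 T, x (t + 1) = proj (x t - η t • v t))
    (hz : z ∈ K) {R : ℝ} (hR : ∀ t ∈ Icc 1 T, ‖x t - z‖ ≤ R) :
    ∑ t ∈ Icc 1 T, ⟪v t, x t - z⟫ ≤ R ^ 2 / (2 * η T) + ∑ t ∈ Icc 1 T, η t / 2 := by
  set b : ℕ → ℝ := fun t => ‖x t - z‖ ^ 2
  have hstep : ∀ t ∈ Icc 1 T, ⟪v t, x t - z⟫ ≤ (b t - b (t + 1)) * (2 * η t)⁻¹ + η t / 2 := by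
    intro t ht
    have hη := hη_pos t ht
    have hv2 : ‖v t‖ ^ 2 ≤ 1 := pow_le_one₀ (norm_nonneg _) (hv t ht)
    have hdesc := norm_proj_sub_smul_sub_sq_le hK hproj_mem hproj_min (x t) (v t) (η t) hz
    rw [← hupd t ht] at hdesc
    have hηv : η t ^ 2 * ‖v t‖ ^ 2 ≤ η t ^ 2 := mul_le_of_le_one_right (sq_nonneg _) hv2
    have hdesc' : 2 * η t * ⟪v t, x t - z⟫ ≤ b t - b (t + 1) + η t ^ 2 := by
      simp only [b]; linarith
    calc ⟪v t, x t - z⟫ = 2 * η t * ⟪v t, x t - z⟫ * (2 * η t)⁻¹ := by field_simp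
      _ ≤ (b t - b (t + 1) + η t ^ 2) * (2 * η t)⁻¹ := by gcongr
      _ = (b t - b (t + 1)) * (2 * η t)⁻¹ + η t / 2 := by field_simp
  have hφ : MonotoneOn (fun t => (2 * η t)⁻¹) (Set.Icc 1 T) := fun s hs t ht hst =>
    inv_anti₀ (by linarith [hη_pos t (mem_Icc.mpr ht)]) (by linarith [hη_anti hs ht hst])
  have hb : ∀ t ∈ Icc 1 T, b t ≤ R ^ 2 := fun t ht => pow_le_pow_left₀ (norm_nonneg _) (hR t ht) 2
  have hφ_one : 0 ≤ (2 * η 1)⁻¹ :=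
    inv_nonneg.mpr (by linarith [hη_pos 1 (mem_Icc.mpr ⟨le_rfl, hT⟩)])
  have habel := sum_Icc_sub_mul_le_mul hT hφ hφ_one hb (sq_nonneg _)
  calc ∑ t ∈ Icc 1 T, ⟪v t, x t - z⟫
      ≤ ∑ t ∈ Icc 1 T, ((b t - b (t + 1)) * (2 * η t)⁻¹ + η t / 2) := sum_le_sum hstep
    _ ≤ R ^ 2 / (2 * η T) + ∑ t ∈ Icc 1 T, η t / 2 := by
      rw [sum_add_distrib, div_eq_mul_inv]
      gcongr

theorem sum_inner_sub_le_of_adaNGD_one_steps (hK : Convex ℝ K) (hproj_mem : ∀ y, proj y ∈ K)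
    (hproj_min : ∀ y, ∀ z ∈ K, ‖proj y - y‖ ≤ ‖z - y‖) (hT : 1 ≤ T) {D : ℝ} (hD : 0 ≤ D)
    (hη : ∀ t, η t = D / √(2 * t)) (hv : ∀ t ∈ Icc 1 T, ‖v t‖ ≤ 1)
    (hupd : ∀ t ∈ Icc 1 T, x (t + 1) = proj (x t - η t • v t))
    (hz : z ∈ K) (hR : ∀ t ∈ Icc 1 T, ‖x t - z‖ ≤ D) :
    ∑ t ∈ Icc 1 T, ⟪v t, x t - z⟫ ≤ √(2 * D ^ 2 * T) := by
  rcases hD.eq_or_lt with rfl | hD_pos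
  · refine (sum_nonpos fun t ht => ?_).trans (Real.sqrt_nonneg _)
    calc ⟪v t, x t - z⟫ ≤ ‖v t‖ * ‖x t - z‖ := real_inner_le_norm _ _
      _ ≤ 1 * 0 := mul_le_mul (hv t ht) (hR t ht) (norm_nonneg _) zero_le_one
      _ = 0 := mul_zero 1
  have hsqrt_mul : ∀ t : ℕ, √(2 * t) = √2 * √t := fun t => Real.sqrt_mul zero_le_two _
  have hη_pos : ∀ t ∈ Icc 1 T, 0 < η t := fun t ht => by
    have : (1 : ℝ) ≤ t := by exact_mod_cast (mem_Icc.mp ht).1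
    rw [hη]; positivity
  have hη_anti : AntitoneOn η (Set.Icc 1 T) := fun s hs t ht hst => by
    have : (1 : ℝ) ≤ s := by exact_mod_cast hs.1
    rw [hη, hη]
    gcongr
  calc ∑ t ∈ Icc 1 T, ⟪v t, x t - z⟫
      ≤ D ^ 2 / (2 * η T) + ∑ t ∈ Icc 1 T, η t / 2 :=
        sum_inner_sub_le_of_projected_steps hK hproj_mem hproj_min hT hη_pos hη_anti hv hupd hz hR
    _ = D ^ 2 / (2 * η T) + D / (2 * √2) * ∑ t ∈ Icc 1 T, (√t)⁻¹ := by
        rw [mul_sum]; congr 1; refine sum_congr rfl fun t _ => ?_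
        rw [hη, hsqrt_mul]; ring
    _ ≤ D ^ 2 / (2 * η T) + D / (2 * √2) * (2 * √T) := by gcongr; exact sum_Icc_inv_sqrt_le T
    _ = √(2 * D ^ 2 * T) := by
        rw [hη, hsqrt_mul, Real.sqrt_mul' _ (Nat.cast_nonneg T), Real.sqrt_mul zero_le_two,
          Real.sqrt_sq hD]
        field_simp
        rw [Real.sq_sqrt zero_le_two]
        norm_num

end ProjectedGradient

theorem adangd_one_general_general
    {d : ℕ} (T : ℕ) (hT : 1 ≤ T) (G : ℝ)
    (K : Set (EuclideanSpace ℝ (Fin d)))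
    (hKbdd : Bornology.IsBounded K)
    (hKconv : Convex ℝ K)
    (proj : EuclideanSpace ℝ (Fin d) → EuclideanSpace ℝ (Fin d))
    (hproj_mem : ∀ y, proj y ∈ K)
    (hproj_min : ∀ y, ∀ z ∈ K, ‖proj y - y‖ ≤ ‖z - y‖)
    (D : ℝ) (hD : D = Metric.diam K)
    (f : EuclideanSpace ℝ (Fin d) → ℝ)
    (hconv : ∀ x y, f x + (inner ℝ (gradient f x) (y - x) : ℝ) ≤ f y)
    (hG : ∀ x ∈ K, ‖gradient f x‖ ≤ G)
    (x : ℕ → EuclideanSpace ℝ (Fin d)) (g : ℕ → EuclideanSpace ℝ (Fin d)) (η : ℕ → ℝ)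
    (hx1 : x 1 ∈ K)
    (hg : ∀ t, g t = gradient f (x t))
    (hgne : ∀ t ∈ Finset.Icc 1 T, g t ≠ 0)
    (hη : ∀ t, η t = D / Real.sqrt (2 * t))
    (hupd : ∀ t ∈ Finset.Icc 1 T, x (t + 1) = proj (x t - (η t / ‖g t‖) • g t))
    (xbar : EuclideanSpace ℝ (Fin d))
    (hxbar : xbar = ∑ t ∈ Finset.Icc 1 T, (((‖g t‖)⁻¹) / ∑ τ ∈ Finset.Icc 1 T, (‖g τ‖)⁻¹) • x t)
    :
    (∀ xs ∈ K,
      f xbar - f xs ≤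
        Real.sqrt (2 * D ^ 2 * T) / ∑ t ∈ Finset.Icc 1 T, (‖g t‖)⁻¹) ∧
    Real.sqrt (2 * D ^ 2 * T) / (∑ t ∈ Finset.Icc 1 T, (‖g t‖)⁻¹) ≤
      Real.sqrt 2 * G * D / Real.sqrt T := by
  have hD_nonneg : 0 ≤ D := hD ▸ Metric.diam_nonneg
  have h1T : 1 ∈ Icc 1 T := mem_Icc.mpr ⟨le_rfl, hT⟩
  have hgpos : ∀ t ∈ Icc 1 T, 0 < ‖g t‖ := fun t ht => norm_pos_iff.mpr (hgne t ht)
  have hxK : ∀ t ∈ Icc 1 T, x t ∈ K := by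
    intro t ht
    obtain ⟨h1t, htT⟩ := mem_Icc.mp ht
    rcases h1t.eq_or_lt with rfl | h1t
    · exact hx1
    · obtain ⟨s, rfl⟩ : ∃ s, t = s + 1 := ⟨t - 1, by omega⟩
      rw [hupd s (mem_Icc.mpr ⟨by omega, by omega⟩)]
      exact hproj_mem _
  have hregret : ∀ xs ∈ K, ∑ t ∈ Icc 1 T, ⟪‖g t‖⁻¹ • g t, x t - xs⟫ ≤ √(2 * D ^ 2 * T) :=
    fun xs hxs => sum_inner_sub_le_of_adaNGD_one_steps hKconv hproj_mem hproj_min hT hD_nonneg hη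
      (fun t ht => (norm_smul_inv_norm (hgne t ht)).le)
      (fun t ht => by rw [hupd t ht, smul_smul, div_eq_mul_inv]) hxs
      (fun t ht => by
        rw [← dist_eq_norm, hD]; exact Metric.dist_le_diam_of_mem hKbdd (hxK t ht) hxs)
  refine ⟨fun xs hxs => ?_, ?_⟩
  · have hS : 0 < ∑ t ∈ Icc 1 T, ‖g t‖⁻¹ :=
      sum_pos (fun t ht => inv_pos.mpr (hgpos t ht)) ⟨1, h1T⟩
    rw [hxbar]
    refine (sum_div_smul_sub_le hconv (fun t _ => inv_nonneg.mpr (norm_nonneg _)) hS x xs).trans ?_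
    gcongr
    simpa only [real_inner_smul_left, hg] using hregret xs hxs
  · calc √(2 * D ^ 2 * T) / ∑ t ∈ Icc 1 T, ‖g t‖⁻¹ ≤ √(2 * D ^ 2 * T) * G / #(Icc 1 T) :=
          div_sum_inv_le (Real.sqrt_nonneg _) ⟨1, h1T⟩ hgpos fun t ht => hg t ▸ hG _ (hxK t ht)
      _ = √2 * G * D / √T := by
          have hT' : (0 : ℝ) < √T := Real.sqrt_pos.mpr (by exact_mod_cast hT)
          rw [Nat.card_Icc, Nat.add_sub_cancel, Real.sqrt_mul' _ (Nat.cast_nonneg T),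
            Real.sqrt_mul zero_le_two, Real.sqrt_sq hD_nonneg]
          field_simp
          rw [Real.sq_sqrt (Nat.cast_nonneg T)]
          ring

theorem adangd_one_general
    {d : ℕ} (T : ℕ) (hT : 1 ≤ T) (G : ℝ)
    (K : Set (EuclideanSpace ℝ (Fin d)))
    (hKne : K.Nonempty) (hKcl : IsClosed K) (hKbdd : Bornology.IsBounded K)
    (hKconv : Convex ℝ K)
    (proj : EuclideanSpace ℝ (Fin d) → EuclideanSpace ℝ (Fin d))
    (hproj_mem : ∀ y, proj y ∈ K)
    (hproj_min : ∀ y, ∀ z ∈ K, ‖proj y - y‖ ≤ ‖z - y‖)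
    (D : ℝ) (hD : D = Metric.diam K)
    (f : EuclideanSpace ℝ (Fin d) → ℝ)
    (hdiff : Differentiable ℝ f)
    (hconv : ∀ x y, f x + (inner ℝ (gradient f x) (y - x) : ℝ) ≤ f y)
    (hG : ∀ x ∈ K, ‖gradient f x‖ ≤ G)
    (x : ℕ → EuclideanSpace ℝ (Fin d)) (g : ℕ → EuclideanSpace ℝ (Fin d)) (η : ℕ → ℝ)
    (hx1 : x 1 ∈ K)
    (hg : ∀ t, g t = gradient f (x t))
    (hgne : ∀ t ∈ Finset.Icc 1 T, g t ≠ 0)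
    (hη : ∀ t, η t = D / Real.sqrt (2 * t))
    (hupd : ∀ t ∈ Finset.Icc 1 T, x (t + 1) = proj (x t - (η t / ‖g t‖) • g t))
    (xbar : EuclideanSpace ℝ (Fin d))
    (hxbar : xbar = ∑ t ∈ Finset.Icc 1 T, (((‖g t‖)⁻¹) / ∑ τ ∈ Finset.Icc 1 T, (‖g τ‖)⁻¹) • x t)
    :
    (∀ xs ∈ K,
      f xbar - f xs ≤
        Real.sqrt (2 * D ^ 2 * T) / ∑ t ∈ Finset.Icc 1 T, (‖g t‖)⁻¹) ∧
    Real.sqrt (2 * D ^ 2 * T) / (∑ t ∈ Finset.Icc 1 T, (‖g t‖)⁻¹) ≤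
      Real.sqrt 2 * G * D / Real.sqrt T :=
  adangd_one_general_general T hT G K hKbdd hKconv proj hproj_mem hproj_min D hD f hconv hG x g η
    hx1 hg hgne hη hupd xbar hxbar
end

section
/- (AdaNGD_1, smooth case.) Let f : ℝ^d → ℝ be convex, differentiable and β-smooth, and suppose the global minimizer x* := argmin_{x ∈ ℝ^d} f(x) exists and belongs to K. Let x_1, …, x_T and x̄_T be the AdaNGD_k iterates and output with k = 1, with g_t := ∇f(x_t) ≠ 0 for all t = 1, …, T. Then f(x̄_T) − min_{x ∈ K} f(x) ≤ D√(2T) / (Σ_{t=1}^T 1/‖g_t‖) ≤ 4 β D² / T. -/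
/-!
By convexity (Jensen plus the gradient inequality), the gap of the weighted average `x̄` is at most
the normalized regret `∑ ‖g_t‖⁻¹ ⟪g_t, x_t - u⟫` divided by `∑ ‖g_t‖⁻¹`. The iterates perform
projected descent along the unit vectors `g_t / ‖g_t‖` with steps `D / √(2t)`, whose regret is at
most `D √(2T)`: the projection is nonexpansive towards points of `K`, and Abel summation bounds the
telescoping distances by `D²`. For the second bound, smoothness and the global minimizer give
`‖g‖² ≤ 2β (f x - f x*) ≤ 2β ⟪g, x - x*⟫`, hence `∑ ‖g_t‖ ≤ 2β D √(2T)`, and Cauchy–Schwarz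
`T² ≤ (∑ ‖g_t‖)(∑ ‖g_t‖⁻¹)` turns this into the bound `4βD²/T`.
-/

open Finset
open scoped RealInnerProductSpace

variable {E : Type*} [NormedAddCommGroup E] [InnerProductSpace ℝ E]

section FirstOrder

variable {f : E → ℝ} {G : E → E} {β : ℝ} {xstar : E}

lemma sub_le_inner_of_tangent_le (hconv : ∀ x y, f x + ⟪G x, y - x⟫ ≤ f y) (x u : E) :
    f x - f u ≤ ⟪G x, x - u⟫ := by
  have h := hconv x u
  rw [← neg_sub x u, inner_neg_right] at h
  linarith

lemma convexOn_univ_of_tangent_le (hconv : ∀ x y, f x + ⟪G x, y - x⟫ ≤ f y) :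
    ConvexOn ℝ Set.univ f := by
  refine ⟨convex_univ, fun y _ z _ a b ha hb hab => ?_⟩
  set p := a • y + b • z
  have hbalance : a * ⟪G p, y - p⟫ + b * ⟪G p, z - p⟫ = 0 := by
    rw [← real_inner_smul_right, ← real_inner_smul_right, ← inner_add_right, smul_sub, smul_sub,
      sub_add_sub_comm, ← add_smul, hab, one_smul, sub_self, inner_zero_right]
  calc f p = a * (f p + ⟪G p, y - p⟫) + b * (f p + ⟪G p, z - p⟫) := by
        linear_combination (-f p) * hab - hbalance
    _ ≤ a • f y + b • f z := by
        simp only [smul_eq_mul]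
        gcongr <;> exact hconv p _

lemma min_le_gradient_step (hsmooth : ∀ x y, f y ≤ f x + ⟪G x, y - x⟫ + β / 2 * ‖x - y‖ ^ 2)
    (hmin : ∀ y, f xstar ≤ f y) (z : E) (s : ℝ) :
    f xstar ≤ f z - s * ‖G z‖ ^ 2 + β / 2 * s ^ 2 * ‖G z‖ ^ 2 := by
  have h := hsmooth z (z - s • G z)
  rw [sub_sub_cancel_left, inner_neg_right, real_inner_smul_right, real_inner_self_eq_norm_sq,
    sub_sub_cancel, norm_smul, mul_pow, Real.norm_eq_abs, sq_abs] at h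
  linarith [hmin (z - s • G z)]

lemma pos_of_smooth_of_ne_zero (hsmooth : ∀ x y, f y ≤ f x + ⟪G x, y - x⟫ + β / 2 * ‖x - y‖ ^ 2)
    (hmin : ∀ y, f xstar ≤ f y) {z : E} (hz : G z ≠ 0) : 0 < β := by
  by_contra! hβ
  have hG : 0 < ‖G z‖ ^ 2 := by positivity
  set s := (f z - f xstar + 1) / ‖G z‖ ^ 2
  have hstep := min_le_gradient_step hsmooth hmin z s
  have hs : s * ‖G z‖ ^ 2 = f z - f xstar + 1 := div_mul_cancel₀ _ hG.ne'
  have hquad : β / 2 * s ^ 2 * ‖G z‖ ^ 2 ≤ 0 :=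
    mul_nonpos_of_nonpos_of_nonneg (mul_nonpos_of_nonpos_of_nonneg (by linarith) (sq_nonneg s))
      hG.le
  linarith

lemma norm_sq_le_of_smooth (hβ : 0 < β)
    (hsmooth : ∀ x y, f y ≤ f x + ⟪G x, y - x⟫ + β / 2 * ‖x - y‖ ^ 2)
    (hmin : ∀ y, f xstar ≤ f y) (z : E) : ‖G z‖ ^ 2 ≤ 2 * β * (f z - f xstar) := by
  have hstep := min_le_gradient_step hsmooth hmin z β⁻¹
  have hquad : β / 2 * β⁻¹ ^ 2 * ‖G z‖ ^ 2 = β⁻¹ * ‖G z‖ ^ 2 / 2 := by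
    field_simp
  rw [hquad] at hstep
  have := mul_le_mul_of_nonneg_left hstep (by positivity : 0 ≤ 2 * β)
  field_simp at this ⊢
  linarith

lemma norm_le_of_smooth_of_tangent_le (hβ : 0 < β)
    (hsmooth : ∀ x y, f y ≤ f x + ⟪G x, y - x⟫ + β / 2 * ‖x - y‖ ^ 2)
    (hconv : ∀ x y, f x + ⟪G x, y - x⟫ ≤ f y) (hmin : ∀ y, f xstar ≤ f y) (z : E) :
    ‖G z‖ ≤ 2 * β * (‖G z‖⁻¹ * ⟪G z, z - xstar⟫) := by
  rcases eq_or_ne (G z) 0 with hz | hz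
  · simp [hz]
  have hG : 0 < ‖G z‖ := norm_pos_iff.2 hz
  have hsq : ‖G z‖ ^ 2 ≤ 2 * β * ⟪G z, z - xstar⟫ :=
    (norm_sq_le_of_smooth hβ hsmooth hmin z).trans
      (mul_le_mul_of_nonneg_left (sub_le_inner_of_tangent_le hconv z xstar) (by positivity))
  rw [← mul_assoc, mul_comm _ (‖G z‖⁻¹), mul_assoc, ← div_eq_inv_mul, le_div_iff₀ hG]
  simpa [sq] using hsq

end FirstOrder

lemma norm_sub_le_of_nearest_point {K : Set E} (hK : Convex ℝ K) {y p : E} (hp : p ∈ K)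
    (hmin : ∀ z ∈ K, ‖p - y‖ ≤ ‖z - y‖) {u : E} (hu : u ∈ K) : ‖p - u‖ ≤ ‖y - u‖ := by
  have : Nonempty K := ⟨⟨p, hp⟩⟩
  have hbdd : BddBelow (Set.range fun w : K => ‖y - w‖) :=
    ⟨0, Set.forall_mem_range.2 fun _ => norm_nonneg _⟩
  have hinf : ‖y - p‖ = ⨅ w : K, ‖y - w‖ :=
    le_antisymm (le_ciInf fun w => by simpa only [norm_sub_rev y] using hmin w w.2)
      (ciInf_le hbdd ⟨p, hp⟩)
  have hvar : ⟪y - p, u - p⟫ ≤ 0 := (norm_eq_iInf_iff_real_inner_le_zero hK hp).1 hinf u hu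
  have hexpand : ‖y - u‖ ^ 2 = ‖y - p‖ ^ 2 - 2 * ⟪y - p, u - p⟫ + ‖p - u‖ ^ 2 := by
    rw [← sub_add_sub_cancel y p u, norm_add_sq_real, ← neg_sub u p, inner_neg_right]
    ring
  refine (pow_le_pow_iff_left₀ (norm_nonneg _) (norm_nonneg _) two_ne_zero).1 ?_
  nlinarith [sq_nonneg ‖y - p‖]

lemma sum_mul_sub_succ_le {a b : ℕ → ℝ} {M : ℝ} (hb : ∀ t, 1 ≤ t → b t ≤ b (t + 1))
    (hb₁ : 0 ≤ b 1) {N : ℕ} (hN : 1 ≤ N) (ha : ∀ t ∈ Icc 1 N, a t ≤ M) :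
    ∑ t ∈ Icc 1 N, b t * (a t - a (t + 1)) ≤ b N * (M - a (N + 1)) := by
  induction N, hN using Nat.le_induction with
  | base =>
    rw [Icc_self, sum_singleton]
    exact mul_le_mul_of_nonneg_left (by linarith [ha 1 (by simp)]) hb₁
  | succ N hN ih =>
    rw [← insert_Icc_right_eq_Icc_add_one (by omega), sum_insert (by simp)]
    have hprev := ih fun t ht => ha t (Icc_subset_Icc_right N.le_succ ht)
    have hlast := ha (N + 1) (by simp)
    nlinarith [mul_nonneg (sub_nonneg.2 (hb N hN)) (sub_nonneg.2 hlast)]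

lemma sum_inv_sqrt_two_mul_le (N : ℕ) :
    ∑ t ∈ Icc 1 N, (√(2 * t))⁻¹ ≤ √(2 * N) := by
  induction N with
  | zero => simp
  | succ N ih =>
    rw [← insert_Icc_right_eq_Icc_add_one (by omega), sum_insert (by simp)]
    set A := √(2 * (N : ℝ))
    set B := √(2 * ((N + 1 : ℕ) : ℝ))
    have hA : A ^ 2 = 2 * N := Real.sq_sqrt (by positivity)
    have hB : B ^ 2 = 2 * N + 2 := by rw [Real.sq_sqrt (by positivity)]; push_cast; ring
    have hBpos : 0 < B := Real.sqrt_pos.2 (by positivity)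
    -- `B - A = 2 / (A + B) ≥ 1 / B`
    have hstep : (B⁻¹ + A) * B ≤ B * B := by
      rw [add_mul, inv_mul_cancel₀ hBpos.ne']
      nlinarith [sq_nonneg (A - B)]
    linarith [le_of_mul_le_mul_right hstep hBpos]

lemma inner_le_of_norm_sub_smul_le {x x' v u : E} {η : ℝ} (hη : 0 < η) (hv : ‖v‖ ≤ 1)
    (hx' : ‖x' - u‖ ≤ ‖x - η • v - u‖) :
    ⟪v, x - u⟫ ≤ (2 * η)⁻¹ * (‖x - u‖ ^ 2 - ‖x' - u‖ ^ 2) + η / 2 := by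
  have hsq := pow_le_pow_left₀ (norm_nonneg _) hx' 2
  rw [sub_right_comm x (η • v) u, norm_sub_sq_real (x - u), real_inner_smul_right, norm_smul,
    Real.norm_of_nonneg hη.le, real_inner_comm] at hsq
  have hv2 : (η * ‖v‖) ^ 2 ≤ η ^ 2 := by
    rw [mul_pow]; exact mul_le_of_le_one_right (sq_nonneg η) (pow_le_one₀ (norm_nonneg v) hv)
  rw [inv_mul_eq_div, ← sub_le_iff_le_add, le_div_iff₀ (by positivity)]
  nlinarith

lemma mem_of_update_eq_proj {α : Type*} {K : Set α} {proj : α → α}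
    (hproj_mem : ∀ y, proj y ∈ K) {x y : ℕ → α} {T : ℕ} (hx₁ : x 1 ∈ K)
    (hupd : ∀ t ∈ Icc 1 T, x (t + 1) = proj (y t)) :
    ∀ t ∈ Icc 1 T, x t ∈ K := by
  intro t ht
  obtain rfl | ht' := eq_or_ne t 1
  · exact hx₁
  obtain ⟨s, rfl⟩ := Nat.exists_eq_add_one_of_ne_zero (show t ≠ 0 by grind)
  rw [hupd s (by grind)]
  exact hproj_mem _

theorem sum_inner_le_of_projected_descent {K : Set E} {proj : E → E}
    (hproj_mem : ∀ y, proj y ∈ K) (hproj : ∀ y, ∀ u ∈ K, ‖proj y - u‖ ≤ ‖y - u‖)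
    {D : ℝ} (hdiam : ∀ p ∈ K, ∀ q ∈ K, ‖p - q‖ ≤ D) {η : ℕ → ℝ}
    (hη_pos : ∀ t, 1 ≤ t → 0 < η t) (hη_anti : ∀ t, 1 ≤ t → η (t + 1) ≤ η t) {x v : ℕ → E}
    {T : ℕ} (hT : 1 ≤ T) (hv : ∀ t ∈ Icc 1 T, ‖v t‖ ≤ 1) (hx₁ : x 1 ∈ K)
    (hupd : ∀ t ∈ Icc 1 T, x (t + 1) = proj (x t - η t • v t)) {u : E} (hu : u ∈ K) :
    ∑ t ∈ Icc 1 T, ⟪v t, x t - u⟫ ≤ (2 * η T)⁻¹ * D ^ 2 + ∑ t ∈ Icc 1 T, η t / 2 := by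
  have hxK := mem_of_update_eq_proj hproj_mem hx₁ hupd
  set a : ℕ → ℝ := fun t => ‖x t - u‖ ^ 2
  have hstep : ∀ t ∈ Icc 1 T, ⟪v t, x t - u⟫ ≤ (2 * η t)⁻¹ * (a t - a (t + 1)) + η t / 2 := by
    intro t ht
    refine inner_le_of_norm_sub_smul_le (hη_pos t (mem_Icc.1 ht).1) (hv t ht) ?_
    rw [hupd t ht]
    exact hproj _ u hu
  have hb : ∀ t, 1 ≤ t → (2 * η t)⁻¹ ≤ (2 * η (t + 1))⁻¹ := fun t ht =>
    inv_anti₀ (by linarith [hη_pos (t + 1) (by omega)]) (by linarith [hη_anti t ht])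
  have htel := sum_mul_sub_succ_le hb (inv_nonneg.2 (by linarith [hη_pos 1 le_rfl])) hT
    (M := D ^ 2) fun t ht => pow_le_pow_left₀ (norm_nonneg _) (hdiam _ (hxK t ht) u hu) 2
  have hlast : (2 * η T)⁻¹ * (D ^ 2 - a (T + 1)) ≤ (2 * η T)⁻¹ * D ^ 2 :=
    mul_le_mul_of_nonneg_left (by simp [a]) (inv_nonneg.2 (by linarith [hη_pos T hT]))
  calc ∑ t ∈ Icc 1 T, ⟪v t, x t - u⟫
      ≤ ∑ t ∈ Icc 1 T, ((2 * η t)⁻¹ * (a t - a (t + 1)) + η t / 2) := sum_le_sum hstep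
    _ ≤ (2 * η T)⁻¹ * D ^ 2 + ∑ t ∈ Icc 1 T, η t / 2 := by
      rw [sum_add_distrib]; linarith

theorem sum_inner_le_of_projected_descent_sqrt {K : Set E} {proj : E → E}
    (hproj_mem : ∀ y, proj y ∈ K) (hproj : ∀ y, ∀ u ∈ K, ‖proj y - u‖ ≤ ‖y - u‖)
    {D : ℝ} (hdiam : ∀ p ∈ K, ∀ q ∈ K, ‖p - q‖ ≤ D) {η : ℕ → ℝ}
    (hη : ∀ t, η t = D / √(2 * t)) {x v : ℕ → E} {T : ℕ} (hT : 1 ≤ T)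
    (hv : ∀ t ∈ Icc 1 T, ‖v t‖ ≤ 1) (hx₁ : x 1 ∈ K)
    (hupd : ∀ t ∈ Icc 1 T, x (t + 1) = proj (x t - η t • v t)) {u : E} (hu : u ∈ K) :
    ∑ t ∈ Icc 1 T, ⟪v t, x t - u⟫ ≤ D * √(2 * T) := by
  have hsqrt_pos : ∀ t : ℕ, 1 ≤ t → 0 < √(2 * t) := fun t ht =>
    Real.sqrt_pos.2 (by have : (1 : ℝ) ≤ t := (by exact_mod_cast ht); linarith)
  obtain hD | hD := (le_trans (norm_nonneg _) (hdiam u hu u hu)).eq_or_lt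
  · have hxK := mem_of_update_eq_proj hproj_mem hx₁ hupd
    have hzero : ∀ t ∈ Icc 1 T, x t - u = 0 := fun t ht =>
      norm_le_zero_iff.1 (hD ▸ hdiam _ (hxK t ht) u hu)
    rw [← hD, zero_mul]
    exact (sum_eq_zero fun t ht => by rw [hzero t ht, inner_zero_right]).le
  have hη_pos : ∀ t, 1 ≤ t → 0 < η t := fun t ht => hη t ▸ div_pos hD (hsqrt_pos t ht)
  have hη_anti : ∀ t, 1 ≤ t → η (t + 1) ≤ η t := fun t ht => by
    rw [hη, hη]
    exact div_le_div_of_nonneg_left hD.le (hsqrt_pos t ht)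
      (Real.sqrt_le_sqrt (by push_cast; linarith))
  refine (sum_inner_le_of_projected_descent hproj_mem hproj hdiam hη_pos hη_anti hT hv hx₁ hupd
    hu).trans ?_
  have hfirst : (2 * η T)⁻¹ * D ^ 2 = D * √(2 * T) / 2 := by
    rw [hη]
    field_simp
  have hsecond : ∑ t ∈ Icc 1 T, η t / 2 ≤ D * √(2 * T) / 2 := by
    simp only [hη, div_eq_mul_inv D]
    rw [← sum_div, ← mul_sum]
    gcongr
    exact sum_inv_sqrt_two_mul_le T
  linarith

theorem sum_inner_le_of_normalized_descent {K : Set E} (hK : Convex ℝ K) {proj : E → E}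
    (hproj_mem : ∀ y, proj y ∈ K) (hproj_min : ∀ y, ∀ z ∈ K, ‖proj y - y‖ ≤ ‖z - y‖)
    {D : ℝ} (hdiam : ∀ p ∈ K, ∀ q ∈ K, ‖p - q‖ ≤ D) {η : ℕ → ℝ}
    (hη : ∀ t, η t = D / √(2 * t)) {x g : ℕ → E} {T : ℕ} (hT : 1 ≤ T) (hx₁ : x 1 ∈ K)
    (hupd : ∀ t ∈ Icc 1 T, x (t + 1) = proj (x t - (η t / ‖g t‖) • g t)) {u : E} (hu : u ∈ K) :
    ∑ t ∈ Icc 1 T, ‖g t‖⁻¹ * ⟪g t, x t - u⟫ ≤ D * √(2 * T) := by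
  simpa only [real_inner_smul_left] using sum_inner_le_of_projected_descent_sqrt hproj_mem
    (fun y u hu => norm_sub_le_of_nearest_point hK (hproj_mem y) (hproj_min y) hu) hdiam hη hT
    (v := fun t => ‖g t‖⁻¹ • g t)
    (fun t _ => by
      rw [norm_smul, norm_inv, norm_norm]; exact inv_mul_le_one_of_le₀ le_rfl (norm_nonneg _))
    hx₁ (fun t ht => by rw [hupd t ht, smul_smul, div_eq_mul_inv]) hu

lemma map_weighted_average_sub_le {ι : Type*} {f : E → ℝ} (hf : ConvexOn ℝ Set.univ f)
    {s : Finset ι} {c : ι → ℝ} (hc : ∀ t ∈ s, 0 ≤ c t) (hS : 0 < ∑ t ∈ s, c t) {p G : ι → E}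
    {u : E} (hG : ∀ t ∈ s, f (p t) - f u ≤ ⟪G t, p t - u⟫) :
    f (∑ t ∈ s, (c t / ∑ τ ∈ s, c τ) • p t) - f u ≤
      (∑ t ∈ s, c t * ⟪G t, p t - u⟫) / ∑ t ∈ s, c t := by
  set S := ∑ τ ∈ s, c τ
  have hw : ∀ t ∈ s, 0 ≤ c t / S := fun t ht => div_nonneg (hc t ht) hS.le
  have hw₁ : ∑ t ∈ s, c t / S = 1 := by rw [← sum_div, div_self hS.ne']
  have hjensen := hf.map_sum_le hw hw₁ fun t _ => Set.mem_univ (p t)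
  calc f (∑ t ∈ s, (c t / S) • p t) - f u ≤ ∑ t ∈ s, c t / S * (f (p t) - f u) := by
        simp only [smul_eq_mul] at hjensen
        simp only [mul_sub, sum_sub_distrib, ← sum_mul, hw₁, one_mul]
        linarith
    _ ≤ ∑ t ∈ s, c t / S * ⟪G t, p t - u⟫ :=
        sum_le_sum fun t ht => mul_le_mul_of_nonneg_left (hG t ht) (hw t ht)
    _ = (∑ t ∈ s, c t * ⟪G t, p t - u⟫) / S := by
        rw [sum_div]; exact sum_congr rfl fun t _ => div_mul_eq_mul_div _ _ _

lemma sq_card_le_sum_mul_sum_inv {ι : Type*} (s : Finset ι) {a : ι → ℝ}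
    (ha : ∀ i ∈ s, 0 < a i) : (#s : ℝ) ^ 2 ≤ (∑ i ∈ s, a i) * ∑ i ∈ s, (a i)⁻¹ := by
  simpa using sum_sq_le_sum_mul_sum_of_sq_le_mul s (r := fun _ => 1) (fun i hi => (ha i hi).le)
    (fun i hi => inv_nonneg.2 (ha i hi).le)
    (fun i hi => by rw [mul_inv_cancel₀ (ha i hi).ne', one_pow])

lemma div_sum_inv_le_of_sum_le {ι : Type*} {s : Finset ι} {a : ι → ℝ} (ha : ∀ i ∈ s, 0 < a i)
    (hs : s.Nonempty) {c R : ℝ} (hR : 0 ≤ R) (hsum : ∑ i ∈ s, a i ≤ c * R) :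
    R / ∑ i ∈ s, (a i)⁻¹ ≤ c * R ^ 2 / #s ^ 2 := by
  have hS : 0 < ∑ i ∈ s, (a i)⁻¹ := sum_pos (fun i hi => inv_pos.2 (ha i hi)) hs
  rw [div_le_div_iff₀ hS (by simp [hs.card_pos])]
  linarith [mul_le_mul_of_nonneg_left (sq_card_le_sum_mul_sum_inv s ha) hR,
    mul_le_mul_of_nonneg_left (mul_le_mul_of_nonneg_right hsum hS.le) hR]

theorem adangd_one_smooth_general
    {d : ℕ} (T : ℕ) (hT : 1 ≤ T) (β : ℝ)
    (K : Set (EuclideanSpace ℝ (Fin d)))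
    (hKbdd : Bornology.IsBounded K)
    (hKconv : Convex ℝ K)
    (proj : EuclideanSpace ℝ (Fin d) → EuclideanSpace ℝ (Fin d))
    (hproj_mem : ∀ y, proj y ∈ K)
    (hproj_min : ∀ y, ∀ z ∈ K, ‖proj y - y‖ ≤ ‖z - y‖)
    (D : ℝ) (hD : D = Metric.diam K)
    (f : EuclideanSpace ℝ (Fin d) → ℝ)
    (hconv : ∀ x y, f x + (inner ℝ (gradient f x) (y - x) : ℝ) ≤ f y)
    (hsmooth : ∀ x y, f y ≤ f x + (inner ℝ (gradient f x) (y - x) : ℝ) + (β / 2) * ‖x - y‖ ^ 2)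
    (xstar : EuclideanSpace ℝ (Fin d)) (hxstarK : xstar ∈ K)
    (hmin : ∀ y, f xstar ≤ f y)
    (x : ℕ → EuclideanSpace ℝ (Fin d)) (g : ℕ → EuclideanSpace ℝ (Fin d)) (η : ℕ → ℝ)
    (hx1 : x 1 ∈ K)
    (hg : ∀ t, g t = gradient f (x t))
    (hgne : ∀ t ∈ Finset.Icc 1 T, g t ≠ 0)
    (hη : ∀ t, η t = D / Real.sqrt (2 * t))
    (hupd : ∀ t ∈ Finset.Icc 1 T, x (t + 1) = proj (x t - (η t / ‖g t‖) • g t))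
    (xbar : EuclideanSpace ℝ (Fin d))
    (hxbar : xbar = ∑ t ∈ Finset.Icc 1 T, (((‖g t‖)⁻¹) / ∑ τ ∈ Finset.Icc 1 T, (‖g τ‖)⁻¹) • x t)
    :
    (∀ xs ∈ K,
      f xbar - f xs ≤
        D * Real.sqrt (2 * T) / ∑ t ∈ Finset.Icc 1 T, (‖g t‖)⁻¹) ∧
    D * Real.sqrt (2 * T) / (∑ t ∈ Finset.Icc 1 T, (‖g t‖)⁻¹) ≤ 4 * β * D ^ 2 / T := by
  have h₁ : 1 ∈ Icc 1 T := mem_Icc.2 ⟨le_rfl, hT⟩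
  have hgpos : ∀ t ∈ Icc 1 T, 0 < ‖g t‖ := fun t ht => norm_pos_iff.2 (hgne t ht)
  have hS : 0 < ∑ t ∈ Icc 1 T, ‖g t‖⁻¹ := sum_pos (fun t ht => inv_pos.2 (hgpos t ht)) ⟨1, h₁⟩
  have hdiam : ∀ p ∈ K, ∀ q ∈ K, ‖p - q‖ ≤ D := fun p hp q hq => by
    rw [hD, ← dist_eq_norm]; exact Metric.dist_le_diam_of_mem hKbdd hp hq
  have hreg : ∀ u ∈ K, ∑ t ∈ Icc 1 T, ‖g t‖⁻¹ * ⟪g t, x t - u⟫ ≤ D * √(2 * T) := fun u hu =>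
    sum_inner_le_of_normalized_descent hKconv hproj_mem hproj_min hdiam hη hT hx1 hupd hu
  constructor
  · intro xs hxs
    rw [hxbar]
    refine (map_weighted_average_sub_le (convexOn_univ_of_tangent_le hconv)
      (fun t ht => (inv_pos.2 (hgpos t ht)).le) hS fun t _ => ?_).trans
      (div_le_div_of_nonneg_right (hreg xs hxs) hS.le)
    rw [hg]
    exact sub_le_inner_of_tangent_le hconv (x t) xs
  · have hβ : 0 < β := pos_of_smooth_of_ne_zero hsmooth hmin (hg 1 ▸ hgne 1 h₁)
    have hsum : ∑ t ∈ Icc 1 T, ‖g t‖ ≤ 2 * β * (D * √(2 * T)) := by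
      calc ∑ t ∈ Icc 1 T, ‖g t‖ ≤ ∑ t ∈ Icc 1 T, 2 * β * (‖g t‖⁻¹ * ⟪g t, x t - xstar⟫) :=
            sum_le_sum fun t _ => by
              simpa only [hg] using norm_le_of_smooth_of_tangent_le hβ hsmooth hconv hmin (x t)
        _ ≤ 2 * β * (D * √(2 * T)) := by
            rw [← mul_sum]; exact mul_le_mul_of_nonneg_left (hreg xstar hxstarK) (by positivity)
    have hR : 0 ≤ D * √(2 * T) := mul_nonneg (hD ▸ Metric.diam_nonneg) (Real.sqrt_nonneg _)
    calc D * √(2 * T) / ∑ t ∈ Icc 1 T, ‖g t‖⁻¹ ≤ 2 * β * (D * √(2 * T)) ^ 2 / T ^ 2 := by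
          simpa using div_sum_inv_le_of_sum_le hgpos ⟨1, h₁⟩ hR hsum
      _ = 4 * β * D ^ 2 / T := by
          field_simp
          rw [Real.sq_sqrt (by positivity)]
          ring

theorem adangd_one_smooth
    {d : ℕ} (T : ℕ) (hT : 1 ≤ T) (β : ℝ)
    (K : Set (EuclideanSpace ℝ (Fin d)))
    (hKne : K.Nonempty) (hKcl : IsClosed K) (hKbdd : Bornology.IsBounded K)
    (hKconv : Convex ℝ K)
    (proj : EuclideanSpace ℝ (Fin d) → EuclideanSpace ℝ (Fin d))
    (hproj_mem : ∀ y, proj y ∈ K)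
    (hproj_min : ∀ y, ∀ z ∈ K, ‖proj y - y‖ ≤ ‖z - y‖)
    (D : ℝ) (hD : D = Metric.diam K)
    (f : EuclideanSpace ℝ (Fin d) → ℝ)
    (hdiff : Differentiable ℝ f)
    (hconv : ∀ x y, f x + (inner ℝ (gradient f x) (y - x) : ℝ) ≤ f y)
    (hsmooth : ∀ x y, f y ≤ f x + (inner ℝ (gradient f x) (y - x) : ℝ) + (β / 2) * ‖x - y‖ ^ 2)
    (xstar : EuclideanSpace ℝ (Fin d)) (hxstarK : xstar ∈ K)
    (hmin : ∀ y, f xstar ≤ f y)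
    (x : ℕ → EuclideanSpace ℝ (Fin d)) (g : ℕ → EuclideanSpace ℝ (Fin d)) (η : ℕ → ℝ)
    (hx1 : x 1 ∈ K)
    (hg : ∀ t, g t = gradient f (x t))
    (hgne : ∀ t ∈ Finset.Icc 1 T, g t ≠ 0)
    (hη : ∀ t, η t = D / Real.sqrt (2 * t))
    (hupd : ∀ t ∈ Finset.Icc 1 T, x (t + 1) = proj (x t - (η t / ‖g t‖) • g t))
    (xbar : EuclideanSpace ℝ (Fin d))
    (hxbar : xbar = ∑ t ∈ Finset.Icc 1 T, (((‖g t‖)⁻¹) / ∑ τ ∈ Finset.Icc 1 T, (‖g τ‖)⁻¹) • x t)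
    :
    (∀ xs ∈ K,
      f xbar - f xs ≤
        D * Real.sqrt (2 * T) / ∑ t ∈ Finset.Icc 1 T, (‖g t‖)⁻¹) ∧
    D * Real.sqrt (2 * T) / (∑ t ∈ Finset.Icc 1 T, (‖g t‖)⁻¹) ≤ 4 * β * D ^ 2 / T :=
  adangd_one_smooth_general T hT β K hKbdd hKconv proj hproj_mem hproj_min D hD f hconv hsmooth
    xstar hxstarK hmin x g η hx1 hg hgne hη hupd xbar hxbar
end

section
/- (AdaNGD_2, smooth case.) Let f : ℝ^d → ℝ be convex, differentiable and β-smooth, and suppose the global minimizer x* := argmin_{x ∈ ℝ^d} f(x) exists and belongs to K. Let x_1, …, x_T and x̄_T be the AdaNGD_k iterates and output with k = 2, with g_t := ∇f(x_t) ≠ 0 for all t = 1, …, T. Then f(x̄_T) − min_{x ∈ K} f(x) ≤ √(2 D²) / √(Σ_{t=1}^T 1/‖g_t‖²) ≤ 4 β D² / T. -/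
/-!
AdaNGD₂ is projected online gradient descent run on the vectors `vₜ = gₜ / ‖gₜ‖²`, whose squared
norms are the weights `1 / ‖gₜ‖²`, with the AdaGrad-norm step `D / √(2 ∑_{τ ≤ t} ‖v_τ‖²)`.
The usual telescoping argument bounds its regret `∑ₜ ⟪vₜ, xₜ - z⟫` by `√2 D √(∑ₜ ‖vₜ‖²)`.
Jensen's inequality and the gradient inequality turn this into the first bound for the
weighted average `x̄`. For the second, smoothness and the global minimum give
`‖gₜ‖² ≤ 2β (f xₜ - f x*) ≤ 2β ⟪gₜ, xₜ - x*⟫`, so every term of the regret against `x*` is at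
least `1 / (2β)`, which bounds `∑ₜ 1 / ‖gₜ‖²` from below.
-/

open Finset RealInnerProductSpace

section Projection

variable {E : Type*} [NormedAddCommGroup E] [InnerProductSpace ℝ E] {K : Set E}

theorem norm_sub_le_of_forall_norm_sub_le (hK : Convex ℝ K) {p y z : E} (hp : p ∈ K)
    (hmin : ∀ w ∈ K, ‖p - y‖ ≤ ‖w - y‖) (hz : z ∈ K) : ‖p - z‖ ≤ ‖y - z‖ := by
  have hinf : ‖y - p‖ = ⨅ w : K, ‖y - w‖ := by
    have : Nonempty K := ⟨⟨p, hp⟩⟩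
    refine le_antisymm (le_ciInf fun w => ?_) (ciInf_le ⟨0, ?_⟩ (⟨p, hp⟩ : K))
    · simpa only [norm_sub_rev y] using hmin w w.2
    · exact Set.forall_mem_range.2 fun w => norm_nonneg _
  have hobtuse : ⟪y - p, z - p⟫ ≤ 0 := (norm_eq_iInf_iff_real_inner_le_zero hK hp).mp hinf z hz
  have hsq : ‖y - z‖ ^ 2 = ‖y - p‖ ^ 2 - 2 * ⟪y - p, z - p⟫ + ‖p - z‖ ^ 2 := by
    rw [show y - z = (y - p) - (z - p) by abel, norm_sub_sq_real, norm_sub_rev z p]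
  exact pow_le_pow_iff_left₀ (norm_nonneg _) (norm_nonneg _) two_ne_zero |>.mp
    (by nlinarith [sq_nonneg ‖y - p‖])

theorem inner_le_of_projected_step (hK : Convex ℝ K) {x x' v z : E} {η : ℝ} (hη : 0 < η)
    (hx' : x' ∈ K) (hmin : ∀ w ∈ K, ‖x' - (x - η • v)‖ ≤ ‖w - (x - η • v)‖) (hz : z ∈ K) :
    ⟪v, x - z⟫ ≤ (‖x - z‖ ^ 2 - ‖x' - z‖ ^ 2) / (2 * η) + η * ‖v‖ ^ 2 / 2 := by
  have hproj := norm_sub_le_of_forall_norm_sub_le hK hx' hmin hz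
  have hexpand : ‖x - η • v - z‖ ^ 2 = ‖x - z‖ ^ 2 - 2 * η * ⟪v, x - z⟫ + η ^ 2 * ‖v‖ ^ 2 := by
    rw [show x - η • v - z = (x - z) - η • v by abel, norm_sub_sq_real, real_inner_smul_right,
      real_inner_comm, norm_smul, Real.norm_of_nonneg hη.le]
    ring
  have hsq := pow_le_pow_left₀ (norm_nonneg _) hproj 2
  rw [div_add_div _ _ (by positivity) two_ne_zero, le_div_iff₀ (by positivity)]
  nlinarith

end Projection

theorem sum_Icc_sub_mul_le {a b : ℕ → ℝ} {c : ℝ} (n : ℕ)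
    (ha : ∀ t ∈ Icc 1 (n + 1), a t ∈ Set.Icc 0 c) (hb0 : ∀ t, 0 ≤ b t) (hb : Monotone b) :
    ∑ t ∈ Icc 1 n, (a t - a (t + 1)) * b t ≤ c * b n := by
  suffices key : ∀ m ≤ n, ∑ t ∈ Icc 1 m, (a t - a (t + 1)) * b t + a (m + 1) * b m ≤
      a 1 * b 0 + c * (b m - b 0) by
    have h1 := ha 1 (by simp)
    have hn := ha (n + 1) (by simp)
    nlinarith [key n le_rfl, hb0 0, hb0 n, h1.2, hn.1]
  intro m hm
  induction m with
  | zero => simp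
  | succ m ih =>
    have hm1 := ha (m + 1) (by simp only [mem_Icc]; omega)
    rw [sum_Icc_succ_top (by omega)]
    nlinarith [ih (by omega), hb m.le_succ, hm1.2]

theorem sum_div_sqrt_partial_sum_le {w : ℕ → ℝ} (hw : ∀ t, 0 ≤ w t) (n : ℕ) :
    ∑ t ∈ Icc 1 n, w t / √(∑ τ ∈ Icc 1 t, w τ) ≤ 2 * √(∑ τ ∈ Icc 1 n, w τ) := by
  induction n with
  | zero => simp
  | succ m ih =>
    rw [sum_Icc_succ_top (by omega), sum_Icc_succ_top (by omega)]
    set S := ∑ τ ∈ Icc 1 m, w τ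
    have hS : 0 ≤ S := sum_nonneg fun t _ => hw t
    -- `w / √(S + w) ≤ 2 (√(S + w) - √S)`, since `w = (√(S + w) - √S) (√(S + w) + √S)`
    have hstep : w (m + 1) / √(S + w (m + 1)) ≤ 2 * √(S + w (m + 1)) - 2 * √S := by
      rcases (Real.sqrt_nonneg (S + w (m + 1))).eq_or_lt with h0 | hpos
      · rw [← h0, div_zero]
        linarith [Real.sqrt_le_sqrt (le_add_of_nonneg_right (hw (m + 1)) : S ≤ S + w (m + 1))]
      · rw [div_le_iff₀ hpos]
        nlinarith [Real.sq_sqrt hS, Real.sq_sqrt (add_nonneg hS (hw (m + 1))), Real.sqrt_nonneg S,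
          sq_nonneg (√(S + w (m + 1)) - √S)]
    linarith

section AdaptiveStep

variable {E : Type*} [NormedAddCommGroup E] [InnerProductSpace ℝ E] {K : Set E}

theorem sum_inner_le_of_adaptive_projected_steps (hK : Convex ℝ K) {P : E → E}
    (hPK : ∀ y, P y ∈ K) (hP : ∀ y, ∀ w ∈ K, ‖P y - y‖ ≤ ‖w - y‖) {D : ℝ} (hD : 0 < D)
    (hKD : ∀ y ∈ K, ∀ z ∈ K, ‖y - z‖ ≤ D) {v x : ℕ → E} {T : ℕ} (hv : v 1 ≠ 0) (hx1 : x 1 ∈ K)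
    (hx : ∀ t ∈ Icc 1 T,
      x (t + 1) = P (x t - (D / √(2 * ∑ τ ∈ Icc 1 t, ‖v τ‖ ^ 2)) • v t))
    {z : E} (hz : z ∈ K) :
    ∑ t ∈ Icc 1 T, ⟪v t, x t - z⟫ ≤ √2 * D * √(∑ t ∈ Icc 1 T, ‖v t‖ ^ 2) := by
  set S : ℕ → ℝ := fun t => ∑ τ ∈ Icc 1 t, ‖v τ‖ ^ 2 with hS
  have hS_mono : Monotone S := fun m n hmn =>
    sum_le_sum_of_subset_of_nonneg (Icc_subset_Icc_right hmn) fun τ _ _ => sq_nonneg _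
  have hS_pos : ∀ t, 1 ≤ t → 0 < S t := fun t ht =>
    (pow_pos (norm_pos_iff.mpr hv) 2).trans_le <| by simpa [hS] using hS_mono ht
  have hxK : ∀ t ∈ Icc 1 (T + 1), x t ∈ K := by
    intro t ht
    rcases eq_or_ne t 1 with rfl | ht1
    · exact hx1
    · rw [mem_Icc] at ht
      obtain ⟨s, rfl⟩ := Nat.exists_eq_add_one.mpr (by omega : 0 < t)
      rw [hx s (mem_Icc.mpr (by omega))]
      exact hPK _
  have hstep : ∀ t ∈ Icc 1 T, ⟪v t, x t - z⟫ ≤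
      (‖x t - z‖ ^ 2 - ‖x (t + 1) - z‖ ^ 2) * (√(2 * S t) / (2 * D)) +
        D / (2 * √2) * (‖v t‖ ^ 2 / √(S t)) := by
    intro t ht
    have hSt := hS_pos t (mem_Icc.mp ht).1
    have hη : 0 < D / √(2 * S t) := by positivity
    have h : ⟪v t, x t - z⟫ ≤ (‖x t - z‖ ^ 2 - ‖x (t + 1) - z‖ ^ 2) / (2 * (D / √(2 * S t))) +
        D / √(2 * S t) * ‖v t‖ ^ 2 / 2 := by
      rw [hx t ht]
      exact inner_le_of_projected_step hK hη (hPK _) (hP _) hz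
    convert h using 2
    · field_simp
    · rw [Real.sqrt_mul zero_le_two]
      field_simp
  have hsum_tele := sum_Icc_sub_mul_le (a := fun t => ‖x t - z‖ ^ 2)
    (b := fun t => √(2 * S t) / (2 * D)) (c := D ^ 2) T
    (fun t ht => ⟨sq_nonneg _, pow_le_pow_left₀ (norm_nonneg _) (hKD _ (hxK t ht) _ hz) 2⟩)
    (fun t => by positivity)
    (fun m n hmn => by dsimp only; gcongr; exact hS_mono hmn)
  have hsum_sqrt := sum_div_sqrt_partial_sum_le (fun t => sq_nonneg ‖v t‖) T
  calc ∑ t ∈ Icc 1 T, ⟪v t, x t - z⟫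
      ≤ ∑ t ∈ Icc 1 T, ((‖x t - z‖ ^ 2 - ‖x (t + 1) - z‖ ^ 2) * (√(2 * S t) / (2 * D)) +
          D / (2 * √2) * (‖v t‖ ^ 2 / √(S t))) := sum_le_sum hstep
    _ ≤ D ^ 2 * (√(2 * S T) / (2 * D)) + D / (2 * √2) * (2 * √(S T)) := by
      rw [sum_add_distrib, ← mul_sum]
      gcongr
    _ = √2 * D * √(S T) := by
      rw [Real.sqrt_mul zero_le_two]
      field_simp
      rw [Real.sq_sqrt zero_le_two]
      ring

theorem adaNGD_two_weighted_regret_le (hK : Convex ℝ K) {P : E → E}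
    (hPK : ∀ y, P y ∈ K) (hP : ∀ y, ∀ w ∈ K, ‖P y - y‖ ≤ ‖w - y‖) {D : ℝ} (hD : 0 < D)
    (hKD : ∀ y ∈ K, ∀ z ∈ K, ‖y - z‖ ≤ D) {g x : ℕ → E} {T : ℕ} (hg : g 1 ≠ 0) (hx1 : x 1 ∈ K)
    (hx : ∀ t ∈ Icc 1 T,
      x (t + 1) = P (x t - (D / √(2 * ∑ τ ∈ Icc 1 t, (‖g τ‖ ^ 2)⁻¹) / ‖g t‖ ^ 2) • g t))
    {z : E} (hz : z ∈ K) :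
    ∑ t ∈ Icc 1 T, (‖g t‖ ^ 2)⁻¹ * ⟪g t, x t - z⟫ ≤
      √2 * D * √(∑ t ∈ Icc 1 T, (‖g t‖ ^ 2)⁻¹) := by
  have hv : ∀ t, ‖(‖g t‖ ^ 2)⁻¹ • g t‖ ^ 2 = (‖g t‖ ^ 2)⁻¹ := fun t => by
    rcases eq_or_ne (g t) 0 with h0 | h0
    · simp [h0]
    · rw [norm_smul, norm_inv, norm_pow, norm_norm]
      field_simp
  have h := sum_inner_le_of_adaptive_projected_steps (v := fun t => (‖g t‖ ^ 2)⁻¹ • g t)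
    hK hPK hP hD hKD (by simpa using hg) hx1
    (fun t ht => by rw [hx t ht, div_eq_mul_inv _ (‖g t‖ ^ 2), mul_smul]; simp only [hv]) hz
  simpa [real_inner_smul_left, hv] using h

end AdaptiveStep

section FirstOrder

variable {E : Type*} [NormedAddCommGroup E] [InnerProductSpace ℝ E] [CompleteSpace E]
  {f : E → ℝ}

theorem smooth_gradient_step_le {β : ℝ}
    (hsmooth : ∀ x y, f y ≤ f x + ⟪gradient f x, y - x⟫ + β / 2 * ‖x - y‖ ^ 2) (x : E) (s : ℝ) :
    f (x - s • gradient f x) ≤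
      f x - s * ‖gradient f x‖ ^ 2 + β / 2 * s ^ 2 * ‖gradient f x‖ ^ 2 := by
  have h := hsmooth x (x - s • gradient f x)
  rwa [sub_sub_cancel_left, sub_sub_cancel, inner_neg_right, real_inner_smul_right,
    real_inner_self_eq_norm_sq, norm_smul, Real.norm_eq_abs, mul_pow, sq_abs, ← sub_eq_add_neg,
    ← mul_assoc] at h

theorem pos_of_smooth_of_gradient_ne_zero {β : ℝ} {xstar x : E}
    (hsmooth : ∀ x y, f y ≤ f x + ⟪gradient f x, y - x⟫ + β / 2 * ‖x - y‖ ^ 2)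
    (hmin : ∀ y, f xstar ≤ f y) (hx : gradient f x ≠ 0) : 0 < β := by
  by_contra! hβ
  have hG : 0 < ‖gradient f x‖ ^ 2 := by positivity
  -- a long enough step along `-∇f x` would descend below the minimum
  obtain ⟨s, hs⟩ : ∃ s, s * ‖gradient f x‖ ^ 2 = f x - f xstar + 1 :=
    ⟨_, div_mul_cancel₀ _ hG.ne'⟩
  have h := (hmin _).trans (smooth_gradient_step_le hsmooth x s)
  nlinarith [mul_nonneg (mul_nonneg (neg_nonneg.mpr hβ) (sq_nonneg s)) hG.le]

theorem sq_norm_gradient_le_of_smooth {β : ℝ} {xstar : E} (hβ : 0 < β)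
    (hsmooth : ∀ x y, f y ≤ f x + ⟪gradient f x, y - x⟫ + β / 2 * ‖x - y‖ ^ 2)
    (hmin : ∀ y, f xstar ≤ f y) (x : E) :
    ‖gradient f x‖ ^ 2 ≤ 2 * β * (f x - f xstar) := by
  have h := (hmin _).trans (smooth_gradient_step_le hsmooth x β⁻¹)
  have hβ' : β / 2 * β⁻¹ ^ 2 = β⁻¹ / 2 := by field_simp
  rw [hβ'] at h
  have h' : β⁻¹ * ‖gradient f x‖ ^ 2 ≤ 2 * (f x - f xstar) := by linarith
  rwa [inv_mul_le_iff₀ hβ, ← mul_assoc, mul_comm β] at h'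

theorem map_sum_le_of_gradient_ineq (hconv : ∀ x y, f x + ⟪gradient f x, y - x⟫ ≤ f y)
    {ι : Type*} {s : Finset ι} {w : ι → ℝ} (hw : ∀ i ∈ s, 0 ≤ w i) (hw1 : ∑ i ∈ s, w i = 1)
    (y : ι → E) : f (∑ i ∈ s, w i • y i) ≤ ∑ i ∈ s, w i * f (y i) := by
  set c := ∑ i ∈ s, w i • y i
  have hcentre : ∑ i ∈ s, w i • (y i - c) = 0 := by
    simp only [smul_sub, sum_sub_distrib, ← sum_smul, hw1, one_smul, c, sub_self]
  calc f c = ∑ i ∈ s, w i * (f c + ⟪gradient f c, y i - c⟫) := by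
        simp only [mul_add, sum_add_distrib, ← sum_mul, hw1, one_mul, ← real_inner_smul_right,
          ← inner_sum, hcentre, inner_zero_right, add_zero]
    _ ≤ ∑ i ∈ s, w i * f (y i) :=
      sum_le_sum fun i hi => mul_le_mul_of_nonneg_left (hconv c _) (hw i hi)

theorem map_weighted_average_sub_le_s5 (hconv : ∀ x y, f x + ⟪gradient f x, y - x⟫ ≤ f y)
    {ι : Type*} {s : Finset ι} {w : ι → ℝ} (hw : ∀ i ∈ s, 0 ≤ w i) (hs : 0 < ∑ i ∈ s, w i)
    (y : ι → E) (z : E) :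
    f (∑ i ∈ s, (w i / ∑ j ∈ s, w j) • y i) - f z ≤
      (∑ i ∈ s, w i * ⟪gradient f (y i), y i - z⟫) / ∑ i ∈ s, w i := by
  set W := ∑ i ∈ s, w i
  have hw1 : ∑ i ∈ s, w i / W = 1 := by rw [← sum_div, div_self hs.ne']
  have hjensen := map_sum_le_of_gradient_ineq hconv (fun i hi => div_nonneg (hw i hi) hs.le) hw1 y
  have hpoint : ∀ i ∈ s, w i / W * (f (y i) - f z) ≤ w i / W * ⟪gradient f (y i), y i - z⟫ :=
    fun i hi => by
      have h := hconv (y i) z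
      rw [← neg_sub, inner_neg_right] at h
      exact mul_le_mul_of_nonneg_left (by linarith) (div_nonneg (hw i hi) hs.le)
  calc _ ≤ ∑ i ∈ s, w i / W * (f (y i) - f z) := by
        simp only [mul_sub, sum_sub_distrib, ← sum_mul, hw1, one_mul]
        linarith
    _ ≤ ∑ i ∈ s, w i / W * ⟪gradient f (y i), y i - z⟫ := sum_le_sum hpoint
    _ = _ := by simp only [sum_div, div_mul_eq_mul_div]

theorem inv_two_mul_le_inner_gradient_div_sq_norm {β : ℝ} {xstar : E} (hβ : 0 < β)
    (hconv : ∀ x y, f x + ⟪gradient f x, y - x⟫ ≤ f y)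
    (hsmooth : ∀ x y, f y ≤ f x + ⟪gradient f x, y - x⟫ + β / 2 * ‖x - y‖ ^ 2)
    (hmin : ∀ y, f xstar ≤ f y) {x : E} (hx : gradient f x ≠ 0) :
    (2 * β)⁻¹ ≤ (‖gradient f x‖ ^ 2)⁻¹ * ⟪gradient f x, x - xstar⟫ := by
  have hgap := sq_norm_gradient_le_of_smooth hβ hsmooth hmin x
  have h := hconv x xstar
  rw [← neg_sub, inner_neg_right] at h
  have hgap' : f x - f xstar ≤ ⟪gradient f x, x - xstar⟫ := by linarith
  rw [inv_mul_eq_div, le_div_iff₀ (by positivity), ← div_eq_inv_mul, div_le_iff₀ (by positivity)]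
  nlinarith

end FirstOrder

theorem sqrt_two_mul_div_sqrt_le_of_div_le {β D S T : ℝ} (hβ : 0 < β) (hD : 0 ≤ D) (hS : 0 < S)
    (hT : 0 < T) (h : T / (2 * β) ≤ √2 * D * √S) : √2 * D / √S ≤ 4 * β * D ^ 2 / T := by
  rw [div_le_iff₀ (by positivity)] at h
  rw [div_le_div_iff₀ (Real.sqrt_pos.mpr hS) hT]
  calc √2 * D * T ≤ √2 * D * (√2 * D * √S * (2 * β)) := by gcongr
    _ = 4 * β * D ^ 2 * √S := by
      linear_combination (2 * β * D ^ 2 * √S) * Real.mul_self_sqrt (zero_le_two : (0 : ℝ) ≤ 2)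

theorem adangd_two_smooth_general
    {d : ℕ} (T : ℕ) (hT : 1 ≤ T) (β : ℝ)
    (K : Set (EuclideanSpace ℝ (Fin d)))
    (hKbdd : Bornology.IsBounded K)
    (hKconv : Convex ℝ K)
    (proj : EuclideanSpace ℝ (Fin d) → EuclideanSpace ℝ (Fin d))
    (hproj_mem : ∀ y, proj y ∈ K)
    (hproj_min : ∀ y, ∀ z ∈ K, ‖proj y - y‖ ≤ ‖z - y‖)
    (D : ℝ) (hD : D = Metric.diam K)
    (f : EuclideanSpace ℝ (Fin d) → ℝ)
    (hconv : ∀ x y, f x + (inner ℝ (gradient f x) (y - x) : ℝ) ≤ f y)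
    (hsmooth : ∀ x y, f y ≤ f x + (inner ℝ (gradient f x) (y - x) : ℝ) + (β / 2) * ‖x - y‖ ^ 2)
    (xstar : EuclideanSpace ℝ (Fin d)) (hxstarK : xstar ∈ K)
    (hmin : ∀ y, f xstar ≤ f y)
    (x : ℕ → EuclideanSpace ℝ (Fin d)) (g : ℕ → EuclideanSpace ℝ (Fin d)) (η : ℕ → ℝ)
    (hx1 : x 1 ∈ K)
    (hg : ∀ t, g t = gradient f (x t))
    (hgne : ∀ t ∈ Finset.Icc 1 T, g t ≠ 0)
    (hη : ∀ t, η t = D / Real.sqrt (2 * ∑ τ ∈ Finset.Icc 1 t, (‖g τ‖ ^ 2)⁻¹))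
    (hupd : ∀ t ∈ Finset.Icc 1 T, x (t + 1) = proj (x t - (η t / ‖g t‖ ^ 2) • g t))
    (xbar : EuclideanSpace ℝ (Fin d))
    (hxbar : xbar = ∑ t ∈ Finset.Icc 1 T, (((‖g t‖ ^ 2)⁻¹) / ∑ τ ∈ Finset.Icc 1 T, (‖g τ‖ ^ 2)⁻¹) • x t)
    :
    (∀ xs ∈ K,
      f xbar - f xs ≤
        Real.sqrt (2 * D ^ 2) / Real.sqrt (∑ t ∈ Finset.Icc 1 T, (‖g t‖ ^ 2)⁻¹)) ∧
    Real.sqrt (2 * D ^ 2) / Real.sqrt (∑ t ∈ Finset.Icc 1 T, (‖g t‖ ^ 2)⁻¹) ≤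
      4 * β * D ^ 2 / T := by
  have hg1 : g 1 ≠ 0 := hgne 1 (mem_Icc.mpr ⟨le_rfl, hT⟩)
  have hβ : 0 < β := pos_of_smooth_of_gradient_ne_zero hsmooth hmin (hg 1 ▸ hg1)
  have hKD : ∀ y ∈ K, ∀ z ∈ K, ‖y - z‖ ≤ D := fun y hy z hz => by
    rw [hD, ← dist_eq_norm]
    exact Metric.dist_le_diam_of_mem hKbdd hy hz
  have hDpos : 0 < D := by
    refine (hD ▸ Metric.diam_nonneg).lt_of_ne fun hD0 => hg1 ?_
    have hx1star : x 1 = xstar := sub_eq_zero.mp (norm_le_zero_iff.mp (hD0 ▸ hKD _ hx1 _ hxstarK))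
    rw [hg 1]
    simpa [hx1star] using sq_norm_gradient_le_of_smooth hβ hsmooth hmin (x 1)
  set S := ∑ t ∈ Icc 1 T, (‖g t‖ ^ 2)⁻¹
  have hS : 0 < S :=
    sum_pos (fun t ht => by have := hgne t ht; positivity) ⟨1, mem_Icc.mpr ⟨le_rfl, hT⟩⟩
  have hregret (z : _) (hz : z ∈ K) :=
    adaNGD_two_weighted_regret_le hKconv hproj_mem hproj_min hDpos hKD hg1 hx1
      (fun t ht => by rw [hupd t ht, hη]) hz
  rw [Real.sqrt_mul zero_le_two, Real.sqrt_sq hDpos.le]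
  refine ⟨fun xs hxs => ?_, ?_⟩
  · calc f xbar - f xs ≤ (∑ t ∈ Icc 1 T, (‖g t‖ ^ 2)⁻¹ * ⟪g t, x t - xs⟫) / S := by
          simpa only [hxbar, ← hg] using map_weighted_average_sub_le_s5 hconv
            (w := fun t => (‖g t‖ ^ 2)⁻¹) (fun t _ => by positivity) hS x xs
      _ ≤ √2 * D * √S / S := by gcongr; exact hregret xs hxs
      _ = √2 * D / √S := by rw [mul_div_assoc, Real.sqrt_div_self', mul_one_div]
  · refine sqrt_two_mul_div_sqrt_le_of_div_le hβ hDpos.le hS (by exact_mod_cast hT) ?_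
    calc (T : ℝ) / (2 * β) = ∑ t ∈ Icc 1 T, (2 * β)⁻¹ := by simp [div_eq_mul_inv]
      _ ≤ ∑ t ∈ Icc 1 T, (‖g t‖ ^ 2)⁻¹ * ⟪g t, x t - xstar⟫ := sum_le_sum fun t ht => by
        rw [hg t]
        exact inv_two_mul_le_inner_gradient_div_sq_norm hβ hconv hsmooth hmin (hg t ▸ hgne t ht)
      _ ≤ √2 * D * √S := hregret xstar hxstarK

theorem adangd_two_smooth
    {d : ℕ} (T : ℕ) (hT : 1 ≤ T) (β : ℝ)
    (K : Set (EuclideanSpace ℝ (Fin d)))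
    (hKne : K.Nonempty) (hKcl : IsClosed K) (hKbdd : Bornology.IsBounded K)
    (hKconv : Convex ℝ K)
    (proj : EuclideanSpace ℝ (Fin d) → EuclideanSpace ℝ (Fin d))
    (hproj_mem : ∀ y, proj y ∈ K)
    (hproj_min : ∀ y, ∀ z ∈ K, ‖proj y - y‖ ≤ ‖z - y‖)
    (D : ℝ) (hD : D = Metric.diam K)
    (f : EuclideanSpace ℝ (Fin d) → ℝ)
    (hdiff : Differentiable ℝ f)
    (hconv : ∀ x y, f x + (inner ℝ (gradient f x) (y - x) : ℝ) ≤ f y)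
    (hsmooth : ∀ x y, f y ≤ f x + (inner ℝ (gradient f x) (y - x) : ℝ) + (β / 2) * ‖x - y‖ ^ 2)
    (xstar : EuclideanSpace ℝ (Fin d)) (hxstarK : xstar ∈ K)
    (hmin : ∀ y, f xstar ≤ f y)
    (x : ℕ → EuclideanSpace ℝ (Fin d)) (g : ℕ → EuclideanSpace ℝ (Fin d)) (η : ℕ → ℝ)
    (hx1 : x 1 ∈ K)
    (hg : ∀ t, g t = gradient f (x t))
    (hgne : ∀ t ∈ Finset.Icc 1 T, g t ≠ 0)
    (hη : ∀ t, η t = D / Real.sqrt (2 * ∑ τ ∈ Finset.Icc 1 t, (‖g τ‖ ^ 2)⁻¹))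
    (hupd : ∀ t ∈ Finset.Icc 1 T, x (t + 1) = proj (x t - (η t / ‖g t‖ ^ 2) • g t))
    (xbar : EuclideanSpace ℝ (Fin d))
    (hxbar : xbar = ∑ t ∈ Finset.Icc 1 T, (((‖g t‖ ^ 2)⁻¹) / ∑ τ ∈ Finset.Icc 1 T, (‖g τ‖ ^ 2)⁻¹) • x t)
    :
    (∀ xs ∈ K,
      f xbar - f xs ≤
        Real.sqrt (2 * D ^ 2) / Real.sqrt (∑ t ∈ Finset.Icc 1 T, (‖g t‖ ^ 2)⁻¹)) ∧
    Real.sqrt (2 * D ^ 2) / Real.sqrt (∑ t ∈ Finset.Icc 1 T, (‖g t‖ ^ 2)⁻¹) ≤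
      4 * β * D ^ 2 / T :=
  adangd_two_smooth_general T hT β K hKbdd hKconv proj hproj_mem hproj_min D hD f hconv hsmooth
    xstar hxstarK hmin x g η hx1 hg hgne hη hupd xbar hxbar
end

section
/- (SC-AdaNGD_2, general case.) Let H > 0, let f : ℝ^d → ℝ be differentiable and H-strongly convex with ‖∇f(x)‖ ≤ G for all x ∈ K, and let x_1, …, x_T and x̄_T be the SC-AdaNGD_k iterates and output with k = 2, with g_t := ∇f(x_t) ≠ 0 for all t = 1, …, T. Then f(x̄_T) − min_{x ∈ K} f(x) ≤ (1 + log(G² Σ_{t=1}^T ‖g_t‖^{−2})) / (2H Σ_{t=1}^T ‖g_t‖^{−2}) ≤ G²(1 + log T) / (2 H T). -/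
/-!
Write `a_t = ‖g_t‖⁻²` and `S_t = a_1 + ⋯ + a_t`, so that the step of SC-AdaNGD₂ is
`η_t a_t = a_t / (H S_t)`. Nonexpansiveness of `Π_K` towards a point `x* ∈ K` together with
`H`-strong convexity at `x_t` gives
`a_t (f x_t - f x*) ≤ (H/2) S_{t-1} ‖x_t - x*‖² - (H/2) S_t ‖x_{t+1} - x*‖² + a_t²‖g_t‖²/(2 H S_t)`
(with `S_0 = 0`), which telescopes. For `k = 2` the last term is `a_t / (2 H S_t)`, and
`1 - 1/u ≤ log u` bounds `∑ a_t / S_t` by `1 + log (S_T / a_1) ≤ 1 + log (G² S_T)`; convexity of `f`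
passes to the weighted average `x̄_T`. Finally `a_t ≥ G⁻²` gives `G² S_T ≥ T`, and
`u ↦ (1 + log u) / u` decreases on `[1, ∞)`.
-/

open Finset
open scoped RealInnerProductSpace

theorem div_add_le_log_add_div {s b : ℝ} (hs : 0 < s) (hb : 0 ≤ b) :
    b / (s + b) ≤ Real.log ((s + b) / s) := by
  have := Real.one_sub_inv_le_log_of_pos (div_pos (add_pos_of_pos_of_nonneg hs hb) hs)
  rwa [inv_div, one_sub_div (add_pos_of_pos_of_nonneg hs hb).ne', add_sub_cancel_left] at this

theorem sum_div_partialSum_le_one_add_log {a : ℕ → ℝ} {n : ℕ} (hn : 1 ≤ n)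
    (ha : ∀ t ∈ Icc 1 n, 0 < a t) {c : ℝ} (hc : 0 < c) (hca : c ≤ a 1) :
    ∑ t ∈ Icc 1 n, a t / ∑ τ ∈ Icc 1 t, a τ ≤ 1 + Real.log ((∑ t ∈ Icc 1 n, a t) / c) := by
  induction n, hn using Nat.le_induction with
  | base =>
    have ha1 := ha 1 (by simp)
    simp only [Icc_self, sum_singleton, div_self ha1.ne']
    linarith [Real.log_nonneg ((one_le_div hc).2 hca)]
  | succ m hm ih =>
    have hsub : Icc 1 m ⊆ Icc 1 (m + 1) := Icc_subset_Icc_right m.le_succ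
    set S := ∑ t ∈ Icc 1 m, a t
    have hS : 0 < S := sum_pos (fun t ht => ha t (hsub ht)) ⟨1, by simp [hm]⟩
    have hlast : 0 < a (m + 1) := ha (m + 1) (by simp)
    have hlog : Real.log ((S + a (m + 1)) / c) =
        Real.log ((S + a (m + 1)) / S) + Real.log (S / c) := by
      rw [← Real.log_mul (by positivity) (by positivity), div_mul_div_cancel₀ hS.ne']
    rw [sum_Icc_succ_top (by omega), sum_Icc_succ_top (by omega), hlog]
    linarith [ih fun t ht => ha t (hsub ht), div_add_le_log_add_div hS hlast.le]

theorem one_add_log_div_le_of_le {T u : ℝ} (hT : 1 ≤ T) (hTu : T ≤ u) :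
    (1 + Real.log u) / u ≤ (1 + Real.log T) / T := by
  have hT₀ : 0 < T := by linarith
  have hlog : Real.log u - Real.log T ≤ u / T - 1 := by
    rw [← Real.log_div (by linarith) hT₀.ne']
    exact Real.log_le_sub_one_of_pos (div_pos (by linarith) hT₀)
  have hmul : T * (u / T - 1) = u - T := by field_simp
  rw [div_le_div_iff₀ (by linarith) hT₀]
  nlinarith [mul_le_mul_of_nonneg_left hlog hT₀.le, Real.log_nonneg hT,
    mul_nonneg (sub_nonneg.2 hTu) (Real.log_nonneg hT)]

theorem one_add_log_mul_div_le {b c s T : ℝ} (hb : 0 < b) (hc : 0 < c) (hT : 1 ≤ T)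
    (hTs : T ≤ c * s) : (1 + Real.log (c * s)) / (b * s) ≤ c * (1 + Real.log T) / (b * T) := by
  have hs : 0 < s := pos_of_mul_pos_right (by linarith) hc.le
  calc _ = c / b * ((1 + Real.log (c * s)) / (c * s)) := by field_simp
    _ ≤ c / b * ((1 + Real.log T) / T) :=
      mul_le_mul_of_nonneg_left (one_add_log_div_le_of_le hT hTs) (by positivity)
    _ = _ := by field_simp

theorem card_le_sq_mul_sum_inv_sq {ι : Type*} {s : Finset ι} {r : ι → ℝ} {G : ℝ}
    (hr : ∀ i ∈ s, 0 < r i) (hrG : ∀ i ∈ s, r i ≤ G) : (#s : ℝ) ≤ G ^ 2 * ∑ i ∈ s, (r i ^ 2)⁻¹ := by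
  rw [mul_sum, card_eq_sum_ones, Nat.cast_sum, Nat.cast_one]
  refine sum_le_sum fun i hi => (le_mul_inv_iff₀ (pow_pos (hr i hi) 2)).2 ?_
  rw [one_mul]
  exact pow_le_pow_left₀ (hr i hi).le (hrG i hi) 2

variable {E : Type*} [NormedAddCommGroup E] [InnerProductSpace ℝ E]

theorem map_sum_le_of_subgradient {ι : Type*} {t : Finset ι} {w : ι → ℝ} {p : ι → E}
    {f : E → ℝ} {v : E} (hw₀ : ∀ i ∈ t, 0 ≤ w i) (hw₁ : ∑ i ∈ t, w i = 1)
    (hv : ∀ i ∈ t, f (∑ j ∈ t, w j • p j) + ⟪v, p i - ∑ j ∈ t, w j • p j⟫ ≤ f (p i)) :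
    f (∑ i ∈ t, w i • p i) ≤ ∑ i ∈ t, w i * f (p i) := by
  set c := ∑ i ∈ t, w i • p i
  have hbalance : ∑ i ∈ t, w i • (p i - c) = 0 := by
    rw [sum_congr rfl fun i _ => smul_sub (w i) (p i) c, sum_sub_distrib, ← sum_smul, hw₁,
      one_smul, sub_self]
  calc f c = ∑ i ∈ t, w i * (f c + ⟪v, p i - c⟫) := by
        simp_rw [mul_add, ← real_inner_smul_right]
        rw [sum_add_distrib, ← sum_mul, hw₁, ← inner_sum, hbalance, inner_zero_right]
        ring
    _ ≤ ∑ i ∈ t, w i * f (p i) :=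
        sum_le_sum fun i hi => mul_le_mul_of_nonneg_left (hv i hi) (hw₀ i hi)

section Projection

variable {K : Set E} {proj : E → E}

theorem inner_sub_proj_sub_proj_nonpos (hKconv : Convex ℝ K) (hproj_mem : ∀ y, proj y ∈ K)
    (hproj_min : ∀ y, ∀ z ∈ K, ‖proj y - y‖ ≤ ‖z - y‖) (y : E) {z : E} (hz : z ∈ K) :
    ⟪y - proj y, z - proj y⟫ ≤ 0 := by
  have : Nonempty K := ⟨⟨proj y, hproj_mem y⟩⟩
  refine (norm_eq_iInf_iff_real_inner_le_zero hKconv (hproj_mem y)).1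
    (le_antisymm (le_ciInf fun w => ?_) ?_) z hz
  · rw [norm_sub_rev y, norm_sub_rev y]
    exact hproj_min y w w.2
  · exact ciInf_le ⟨0, by rintro r ⟨w, rfl⟩; exact norm_nonneg _⟩ (⟨proj y, hproj_mem y⟩ : K)

theorem norm_proj_sub_sq_le (hKconv : Convex ℝ K) (hproj_mem : ∀ y, proj y ∈ K)
    (hproj_min : ∀ y, ∀ z ∈ K, ‖proj y - y‖ ≤ ‖z - y‖) (y : E) {z : E} (hz : z ∈ K) :
    ‖proj y - z‖ ^ 2 ≤ ‖y - z‖ ^ 2 := by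
  have hvar := inner_sub_proj_sub_proj_nonpos hKconv hproj_mem hproj_min y hz
  have hexp : ‖y - z‖ ^ 2 = ‖y - proj y‖ ^ 2 - 2 * ⟪y - proj y, z - proj y⟫ + ‖proj y - z‖ ^ 2 := by
    rw [← sub_add_sub_cancel y (proj y) z, norm_add_sq_real, ← neg_sub z, inner_neg_right]
    ring
  nlinarith [sq_nonneg ‖y - proj y‖]

theorem weighted_proj_step_le (hKconv : Convex ℝ K) (hproj_mem : ∀ y, proj y ∈ K)
    (hproj_min : ∀ y, ∀ z ∈ K, ‖proj y - y‖ ≤ ‖z - y‖) {f : E → ℝ} {H a s : ℝ} (hH : 0 < H)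
    (ha : 0 < a) (has : a ≤ s) {y v z : E} (hz : z ∈ K)
    (hsc : f y + ⟪v, z - y⟫ + H / 2 * ‖y - z‖ ^ 2 ≤ f z) :
    a * (f y - f z) + H / 2 * s * ‖proj (y - (1 / (H * s) * a) • v) - z‖ ^ 2 ≤
      H / 2 * (s - a) * ‖y - z‖ ^ 2 + 1 / (H * s) * (a * ‖v‖) ^ 2 / 2 := by
  have hs : 0 < s := ha.trans_le has
  set γ := 1 / (H * s) * a
  have hdescent : ‖proj (y - γ • v) - z‖ ^ 2 ≤
      ‖y - z‖ ^ 2 - 2 * γ * ⟪v, y - z⟫ + γ ^ 2 * ‖v‖ ^ 2 := by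
    calc ‖proj (y - γ • v) - z‖ ^ 2 ≤ ‖(y - z) - γ • v‖ ^ 2 := by
          rw [sub_right_comm]; exact norm_proj_sub_sq_le hKconv hproj_mem hproj_min _ hz
      _ = _ := by
          rw [norm_sub_sq_real, real_inner_smul_right, norm_smul, real_inner_comm, mul_pow,
            Real.norm_eq_abs, sq_abs]
          ring
  have hgap : f y - f z ≤ ⟪v, y - z⟫ - H / 2 * ‖y - z‖ ^ 2 := by
    rw [← neg_sub y z, inner_neg_right] at hsc
    linarith
  have hscaled : H / 2 * s * ‖proj (y - γ • v) - z‖ ^ 2 ≤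
      H / 2 * s * ‖y - z‖ ^ 2 - a * ⟪v, y - z⟫ + 1 / (H * s) * (a * ‖v‖) ^ 2 / 2 := by
    calc _ ≤ H / 2 * s * (‖y - z‖ ^ 2 - 2 * γ * ⟪v, y - z⟫ + γ ^ 2 * ‖v‖ ^ 2) :=
          mul_le_mul_of_nonneg_left hdescent (by positivity)
      _ = _ := by simp only [γ]; field_simp
  linarith [mul_le_mul_of_nonneg_left hgap ha.le]

theorem weighted_regret_le (hKconv : Convex ℝ K) (hproj_mem : ∀ y, proj y ∈ K)
    (hproj_min : ∀ y, ∀ z ∈ K, ‖proj y - y‖ ≤ ‖z - y‖) {f : E → ℝ} {H : ℝ} (hH : 0 < H)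
    {x g : ℕ → E} {a η : ℕ → ℝ} {n : ℕ} (ha : ∀ t ∈ Icc 1 n, 0 < a t)
    (hη : ∀ t, η t = 1 / (H * ∑ τ ∈ Icc 1 t, a τ))
    (hupd : ∀ t ∈ Icc 1 n, x (t + 1) = proj (x t - (η t * a t) • g t)) {z : E} (hz : z ∈ K)
    (hsc : ∀ t ∈ Icc 1 n, f (x t) + ⟪g t, z - x t⟫ + H / 2 * ‖x t - z‖ ^ 2 ≤ f z) :
    ∑ t ∈ Icc 1 n, a t * (f (x t) - f z) + H / 2 * (∑ t ∈ Icc 1 n, a t) * ‖x (n + 1) - z‖ ^ 2 ≤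
      ∑ t ∈ Icc 1 n, η t * (a t * ‖g t‖) ^ 2 / 2 := by
  induction n with
  | zero => simp
  | succ m ih =>
    have hmem : m + 1 ∈ Icc 1 (m + 1) := by simp
    have hsub : Icc 1 m ⊆ Icc 1 (m + 1) := Icc_subset_Icc_right m.le_succ
    have hstep := weighted_proj_step_le hKconv hproj_mem hproj_min hH (ha _ hmem)
      (single_le_sum (fun t ht => (ha t ht).le) hmem) hz (hsc _ hmem)
    rw [← hη, ← hupd _ hmem, sum_Icc_succ_top (by omega), add_sub_cancel_right] at hstep
    have := ih (fun t ht => ha t (hsub ht)) (fun t ht => hupd t (hsub ht))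
      (fun t ht => hsc t (hsub ht))
    simp only [sum_Icc_succ_top (by omega : 1 ≤ m + 1)] at this ⊢
    linarith

theorem sc_adangd_suboptimality_le (hKconv : Convex ℝ K) (hproj_mem : ∀ y, proj y ∈ K)
    (hproj_min : ∀ y, ∀ z ∈ K, ‖proj y - y‖ ≤ ‖z - y‖) {f : E → ℝ} {f' : E → E} {H : ℝ}
    (hH : 0 < H) (hsc : ∀ x y, f x + ⟪f' x, y - x⟫ + H / 2 * ‖x - y‖ ^ 2 ≤ f y)
    {x g : ℕ → E} {a η : ℕ → ℝ} {n : ℕ} (hn : 1 ≤ n) (hg : ∀ t ∈ Icc 1 n, g t = f' (x t))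
    (ha : ∀ t ∈ Icc 1 n, 0 < a t) (hη : ∀ t, η t = 1 / (H * ∑ τ ∈ Icc 1 t, a τ))
    (hupd : ∀ t ∈ Icc 1 n, x (t + 1) = proj (x t - (η t * a t) • g t)) {z : E} (hz : z ∈ K) :
    f (∑ t ∈ Icc 1 n, (a t / ∑ τ ∈ Icc 1 n, a τ) • x t) - f z ≤
      (∑ t ∈ Icc 1 n, η t * (a t * ‖g t‖) ^ 2 / 2) / ∑ t ∈ Icc 1 n, a t := by
  set S := ∑ t ∈ Icc 1 n, a t
  have hS : 0 < S := sum_pos ha ⟨1, by simp [hn]⟩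
  have hregret := weighted_regret_le hKconv hproj_mem hproj_min hH ha hη hupd hz
    fun t ht => hg t ht ▸ hsc (x t) z
  have hjensen := map_sum_le_of_subgradient (t := Icc 1 n) (p := x) (f := f)
    (fun t ht => (div_pos (ha t ht) hS).le) (by rw [← sum_div, div_self hS.ne'])
    fun t _ => le_of_add_le_of_nonneg_left (hsc _ (x t)) (by positivity)
  have haverage : (∑ t ∈ Icc 1 n, a t * (f (x t) - f z)) / S =
      ∑ t ∈ Icc 1 n, a t / S * f (x t) - f z := by
    simp only [mul_sub, sum_sub_distrib, ← sum_mul, sub_div, div_mul_eq_mul_div, ← sum_div]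
    rw [mul_div_cancel_left₀ _ hS.ne']
  calc _ ≤ (∑ t ∈ Icc 1 n, a t * (f (x t) - f z)) / S := by linarith
    _ ≤ _ := by
      refine div_le_div_of_nonneg_right ?_ hS.le
      have : 0 ≤ H / 2 * S * ‖x (n + 1) - z‖ ^ 2 := by positivity
      linarith

theorem sc_adangd_two_suboptimality_le (hKconv : Convex ℝ K) (hproj_mem : ∀ y, proj y ∈ K)
    (hproj_min : ∀ y, ∀ z ∈ K, ‖proj y - y‖ ≤ ‖z - y‖) {f : E → ℝ} {f' : E → E} {H : ℝ}
    (hH : 0 < H) (hsc : ∀ x y, f x + ⟪f' x, y - x⟫ + H / 2 * ‖x - y‖ ^ 2 ≤ f y)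
    {x g : ℕ → E} {η : ℕ → ℝ} {n : ℕ} (hn : 1 ≤ n) (hg : ∀ t ∈ Icc 1 n, g t = f' (x t))
    (hgne : ∀ t ∈ Icc 1 n, g t ≠ 0) (hη : ∀ t, η t = 1 / (H * ∑ τ ∈ Icc 1 t, (‖g τ‖ ^ 2)⁻¹))
    (hupd : ∀ t ∈ Icc 1 n, x (t + 1) = proj (x t - (η t / ‖g t‖ ^ 2) • g t))
    {z : E} (hz : z ∈ K) :
    f (∑ t ∈ Icc 1 n, ((‖g t‖ ^ 2)⁻¹ / ∑ τ ∈ Icc 1 n, (‖g τ‖ ^ 2)⁻¹) • x t) - f z ≤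
      (∑ t ∈ Icc 1 n, (‖g t‖ ^ 2)⁻¹ / ∑ τ ∈ Icc 1 t, (‖g τ‖ ^ 2)⁻¹) /
        (2 * H * ∑ t ∈ Icc 1 n, (‖g t‖ ^ 2)⁻¹) := by
  have hgpos : ∀ t ∈ Icc 1 n, 0 < ‖g t‖ := fun t ht => norm_pos_iff.2 (hgne t ht)
  have hstep : ∀ t ∈ Icc 1 n, η t * ((‖g t‖ ^ 2)⁻¹ * ‖g t‖) ^ 2 / 2 =
      (‖g t‖ ^ 2)⁻¹ / (∑ τ ∈ Icc 1 t, (‖g τ‖ ^ 2)⁻¹) / (2 * H) := by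
    intro t ht
    have := hgpos t ht
    rw [hη]
    field_simp
  rw [← div_div, sum_div, ← sum_congr rfl hstep]
  exact sc_adangd_suboptimality_le hKconv hproj_mem hproj_min hH hsc hn hg
    (fun t ht => inv_pos.2 (pow_pos (hgpos t ht) 2)) hη
    (fun t ht => by rw [hupd t ht, div_eq_mul_inv]) hz

end Projection

theorem sc_adangd_two_general_general
    {d : ℕ} (T : ℕ) (hT : 1 ≤ T) (H G : ℝ) (hH : 0 < H)
    (K : Set (EuclideanSpace ℝ (Fin d)))
    (hKconv : Convex ℝ K)
    (proj : EuclideanSpace ℝ (Fin d) → EuclideanSpace ℝ (Fin d))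
    (hproj_mem : ∀ y, proj y ∈ K)
    (hproj_min : ∀ y, ∀ z ∈ K, ‖proj y - y‖ ≤ ‖z - y‖)
    (f : EuclideanSpace ℝ (Fin d) → ℝ)
    (hsc : ∀ x y, f x + (inner ℝ (gradient f x) (y - x) : ℝ) + (H / 2) * ‖x - y‖ ^ 2 ≤ f y)
    (hG : ∀ x ∈ K, ‖gradient f x‖ ≤ G)
    (x : ℕ → EuclideanSpace ℝ (Fin d)) (g : ℕ → EuclideanSpace ℝ (Fin d)) (η : ℕ → ℝ)
    (hx1 : x 1 ∈ K)
    (hg : ∀ t, g t = gradient f (x t))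
    (hgne : ∀ t ∈ Finset.Icc 1 T, g t ≠ 0)
    (hη : ∀ t, η t = 1 / (H * ∑ τ ∈ Finset.Icc 1 t, (‖g τ‖ ^ 2)⁻¹))
    (hupd : ∀ t ∈ Finset.Icc 1 T, x (t + 1) = proj (x t - (η t / ‖g t‖ ^ 2) • g t))
    (xbar : EuclideanSpace ℝ (Fin d))
    (hxbar : xbar = ∑ t ∈ Finset.Icc 1 T, (((‖g t‖ ^ 2)⁻¹) / ∑ τ ∈ Finset.Icc 1 T, (‖g τ‖ ^ 2)⁻¹) • x t)
    :
    (∀ xs ∈ K,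
      f xbar - f xs ≤
        (1 + Real.log (G ^ 2 * ∑ t ∈ Finset.Icc 1 T, (‖g t‖ ^ 2)⁻¹)) /
          (2 * H * ∑ t ∈ Finset.Icc 1 T, (‖g t‖ ^ 2)⁻¹)) ∧
    (1 + Real.log (G ^ 2 * ∑ t ∈ Finset.Icc 1 T, (‖g t‖ ^ 2)⁻¹)) /
        (2 * H * ∑ t ∈ Finset.Icc 1 T, (‖g t‖ ^ 2)⁻¹) ≤
      G ^ 2 * (1 + Real.log T) / (2 * H * T) := by
  have hxK : ∀ t ∈ Icc 1 T, x t ∈ K := by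
    rintro (_ | _ | t) ht
    · simp at ht
    · exact hx1
    · rw [hupd (t + 1) (by simp at ht ⊢; omega)]
      exact hproj_mem _
  have hgpos : ∀ t ∈ Icc 1 T, 0 < ‖g t‖ := fun t ht => norm_pos_iff.2 (hgne t ht)
  have hgG : ∀ t ∈ Icc 1 T, ‖g t‖ ≤ G := fun t ht => hg t ▸ hG _ (hxK t ht)
  have h1T : 1 ∈ Icc 1 T := by simp [hT]
  have hG₀ : 0 < G := (hgpos 1 h1T).trans_le (hgG 1 h1T)
  have hTS := card_le_sq_mul_sum_inv_sq hgpos hgG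
  rw [Nat.card_Icc, Nat.add_sub_cancel] at hTS
  refine ⟨fun xs hxs => ?_, one_add_log_mul_div_le (by positivity) (by positivity)
    (by exact_mod_cast hT) hTS⟩
  refine hxbar ▸ (sc_adangd_two_suboptimality_le hKconv hproj_mem hproj_min hH hsc hT
    (fun t _ => hg t) hgne hη hupd hxs).trans ?_
  gcongr
  rw [mul_comm, ← div_inv_eq_mul]
  have ha₁ : (G ^ 2)⁻¹ ≤ (‖g 1‖ ^ 2)⁻¹ :=
    inv_anti₀ (pow_pos (hgpos 1 h1T) 2) (pow_le_pow_left₀ (hgpos 1 h1T).le (hgG 1 h1T) 2)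
  exact sum_div_partialSum_le_one_add_log hT (fun t ht => inv_pos.2 (pow_pos (hgpos t ht) 2))
    (by positivity) ha₁

theorem sc_adangd_two_general
    {d : ℕ} (T : ℕ) (hT : 1 ≤ T) (H G : ℝ) (hH : 0 < H)
    (K : Set (EuclideanSpace ℝ (Fin d)))
    (hKne : K.Nonempty) (hKcl : IsClosed K) (hKbdd : Bornology.IsBounded K)
    (hKconv : Convex ℝ K)
    (proj : EuclideanSpace ℝ (Fin d) → EuclideanSpace ℝ (Fin d))
    (hproj_mem : ∀ y, proj y ∈ K)
    (hproj_min : ∀ y, ∀ z ∈ K, ‖proj y - y‖ ≤ ‖z - y‖)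
    (f : EuclideanSpace ℝ (Fin d) → ℝ)
    (hdiff : Differentiable ℝ f)
    (hsc : ∀ x y, f x + (inner ℝ (gradient f x) (y - x) : ℝ) + (H / 2) * ‖x - y‖ ^ 2 ≤ f y)
    (hG : ∀ x ∈ K, ‖gradient f x‖ ≤ G)
    (x : ℕ → EuclideanSpace ℝ (Fin d)) (g : ℕ → EuclideanSpace ℝ (Fin d)) (η : ℕ → ℝ)
    (hx1 : x 1 ∈ K)
    (hg : ∀ t, g t = gradient f (x t))
    (hgne : ∀ t ∈ Finset.Icc 1 T, g t ≠ 0)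
    (hη : ∀ t, η t = 1 / (H * ∑ τ ∈ Finset.Icc 1 t, (‖g τ‖ ^ 2)⁻¹))
    (hupd : ∀ t ∈ Finset.Icc 1 T, x (t + 1) = proj (x t - (η t / ‖g t‖ ^ 2) • g t))
    (xbar : EuclideanSpace ℝ (Fin d))
    (hxbar : xbar = ∑ t ∈ Finset.Icc 1 T, (((‖g t‖ ^ 2)⁻¹) / ∑ τ ∈ Finset.Icc 1 T, (‖g τ‖ ^ 2)⁻¹) • x t)
    :
    (∀ xs ∈ K,
      f xbar - f xs ≤
        (1 + Real.log (G ^ 2 * ∑ t ∈ Finset.Icc 1 T, (‖g t‖ ^ 2)⁻¹)) /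
          (2 * H * ∑ t ∈ Finset.Icc 1 T, (‖g t‖ ^ 2)⁻¹)) ∧
    (1 + Real.log (G ^ 2 * ∑ t ∈ Finset.Icc 1 T, (‖g t‖ ^ 2)⁻¹)) /
        (2 * H * ∑ t ∈ Finset.Icc 1 T, (‖g t‖ ^ 2)⁻¹) ≤
      G ^ 2 * (1 + Real.log T) / (2 * H * T) :=
  sc_adangd_two_general_general T hT H G hH K hKconv proj hproj_mem hproj_min f hsc hG x g η hx1 hg
    hgne hη hupd xbar hxbar
end
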